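/- arXiv:2407.13406 — 11 statements merged into one kernel-verified Lean document; each statement's English description precedes it below -/
import Mathlib

section
/- A finite irreflexive relation (Δ,≺) is a quasi-stratified order if and only if it satisfies QSO2: for all x,y,z,t, x ≺ y ∧ z ≺ t implies (x ≺ t ∧ z ≺ y) ∨ (x ≺ z ∧ x ≺ t) ∨ (z ≺ x ∧ z ≺ y) ∨ (t ≺ y ∧ z ≺ y) ∨ (y ≺ t ∧ x ≺ t). -/
/-- Quasi-stratified orders: the smallest class of (finite domain, relation) pairs
containing (∅,∅), closed under adding a fresh unordered element, and under
sequential composition of disjoint-domain QS-orders. -/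
inductive QSO {α : Type*} [DecidableEq α] : Finset α → (α → α → Prop) → Prop
  | empty : QSO ∅ (fun _ _ => False)
  | add {Δ : Finset α} {r : α → α → Prop} (x : α) (hx : x ∉ Δ) :
      QSO Δ r → QSO (insert x Δ) r
  | comp {Δ Δ' : Finset α} {r r' : α → α → Prop} (hd : Disjoint Δ Δ') :
      QSO Δ r → QSO Δ' r' →
      QSO (Δ ∪ Δ') (fun a b => r a b ∨ r' a b ∨ (a ∈ Δ ∧ b ∈ Δ'))

namespace QSOaux

variable {α : Type*} [DecidableEq α]

theorem support {Δ : Finset α} {r : α → α → Prop} (h : QSO Δ r) :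
    ∀ a b, r a b → a ∈ Δ ∧ b ∈ Δ := by
  induction h with
  | empty => exact fun a b h => h.elim
  | add x hx h ih =>
      exact fun a b hab => ⟨Finset.mem_insert_of_mem (ih a b hab).1,
        Finset.mem_insert_of_mem (ih a b hab).2⟩
  | comp hd h1 h2 ih1 ih2 =>
      rintro a b (hab | hab | ⟨ha, hb⟩)
      · exact ⟨Finset.mem_union_left _ (ih1 a b hab).1, Finset.mem_union_left _ (ih1 a b hab).2⟩
      · exact ⟨Finset.mem_union_right _ (ih2 a b hab).1, Finset.mem_union_right _ (ih2 a b hab).2⟩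
      · exact ⟨Finset.mem_union_left _ ha, Finset.mem_union_right _ hb⟩

theorem irrefl' {Δ : Finset α} {r : α → α → Prop} (h : QSO Δ r) : ∀ x, ¬ r x x := by
  induction h with
  | empty => exact fun x h => h
  | add x hx h ih => exact ih
  | comp hd h1 h2 ih1 ih2 =>
      rintro x (hx | hx | ⟨hx1, hx2⟩)
      · exact ih1 x hx
      · exact ih2 x hx
      · exact Finset.disjoint_left.mp hd hx1 hx2

theorem ax2 {Δ : Finset α} {r : α → α → Prop} (h : QSO Δ r) :
    ∀ x y z t, r x y → r z t →
      (r x t ∧ r z y) ∨ (r x z ∧ r x t) ∨ (r z x ∧ r z y) ∨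
      (r t y ∧ r z y) ∨ (r y t ∧ r x t) := by
  induction h with
  | empty => exact fun x y z t h => h.elim
  | add x hx h ih => exact ih
  | comp hd h1 h2 ih1 ih2 =>
      have s1 := support h1
      have s2 := support h2
      rintro x y z t (hxy | hxy | ⟨hx, hy⟩) (hzt | hzt | ⟨hz, ht⟩)
      · -- r x y, r z t
        rcases ih1 x y z t hxy hzt with ⟨h1', h2'⟩ | ⟨h1', h2'⟩ | ⟨h1', h2'⟩ | ⟨h1', h2'⟩ | ⟨h1', h2'⟩
        · exact Or.inl ⟨Or.inl h1', Or.inl h2'⟩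
        · exact Or.inr (Or.inl ⟨Or.inl h1', Or.inl h2'⟩)
        · exact Or.inr (Or.inr (Or.inl ⟨Or.inl h1', Or.inl h2'⟩))
        · exact Or.inr (Or.inr (Or.inr (Or.inl ⟨Or.inl h1', Or.inl h2'⟩)))
        · exact Or.inr (Or.inr (Or.inr (Or.inr ⟨Or.inl h1', Or.inl h2'⟩)))
      · -- r x y, r' z t : disjunct 5  (y ≺ t, x ≺ t), cross edges
        exact Or.inr (Or.inr (Or.inr (Or.inr
          ⟨Or.inr (Or.inr ⟨(s1 x y hxy).2, (s2 z t hzt).2⟩),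
           Or.inr (Or.inr ⟨(s1 x y hxy).1, (s2 z t hzt).2⟩)⟩)))
      · -- r x y, cross z t : disjunct 5
        exact Or.inr (Or.inr (Or.inr (Or.inr
          ⟨Or.inr (Or.inr ⟨(s1 x y hxy).2, ht⟩),
           Or.inr (Or.inr ⟨(s1 x y hxy).1, ht⟩)⟩)))
      · -- r' x y, r z t : disjunct 3 (z ≺ x, z ≺ y)
        exact Or.inr (Or.inr (Or.inl
          ⟨Or.inr (Or.inr ⟨(s1 z t hzt).1, (s2 x y hxy).1⟩),
           Or.inr (Or.inr ⟨(s1 z t hzt).1, (s2 x y hxy).2⟩)⟩))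
      · -- r' x y, r' z t
        rcases ih2 x y z t hxy hzt with ⟨h1', h2'⟩ | ⟨h1', h2'⟩ | ⟨h1', h2'⟩ | ⟨h1', h2'⟩ | ⟨h1', h2'⟩
        · exact Or.inl ⟨Or.inr (Or.inl h1'), Or.inr (Or.inl h2')⟩
        · exact Or.inr (Or.inl ⟨Or.inr (Or.inl h1'), Or.inr (Or.inl h2')⟩)
        · exact Or.inr (Or.inr (Or.inl ⟨Or.inr (Or.inl h1'), Or.inr (Or.inl h2')⟩))
        · exact Or.inr (Or.inr (Or.inr (Or.inl ⟨Or.inr (Or.inl h1'), Or.inr (Or.inl h2')⟩)))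
        · exact Or.inr (Or.inr (Or.inr (Or.inr ⟨Or.inr (Or.inl h1'), Or.inr (Or.inl h2')⟩)))
      · -- r' x y, cross z t : disjunct 3
        exact Or.inr (Or.inr (Or.inl
          ⟨Or.inr (Or.inr ⟨hz, (s2 x y hxy).1⟩),
           Or.inr (Or.inr ⟨hz, (s2 x y hxy).2⟩)⟩))
      · -- cross x y, r z t : disjunct 4 (t ≺ y, z ≺ y)
        exact Or.inr (Or.inr (Or.inr (Or.inl
          ⟨Or.inr (Or.inr ⟨(s1 z t hzt).2, hy⟩),
           Or.inr (Or.inr ⟨(s1 z t hzt).1, hy⟩)⟩)))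
      · -- cross x y, r' z t : disjunct 2 (x ≺ z, x ≺ t)
        exact Or.inr (Or.inl
          ⟨Or.inr (Or.inr ⟨hx, (s2 z t hzt).1⟩),
           Or.inr (Or.inr ⟨hx, (s2 z t hzt).2⟩)⟩)
      · -- cross cross : disjunct 1
        exact Or.inl ⟨Or.inr (Or.inr ⟨hx, ht⟩), Or.inr (Or.inr ⟨hz, hy⟩)⟩

theorem of_axioms : ∀ (n : ℕ) (Δ : Finset α) (r : α → α → Prop),
    Δ.card ≤ n →
    (∀ a b, r a b → a ∈ Δ ∧ b ∈ Δ) →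
    (∀ x, ¬ r x x) →
    (∀ x y z t, r x y → r z t →
      (r x t ∧ r z y) ∨ (r x z ∧ r x t) ∨ (r z x ∧ r z y) ∨
      (r t y ∧ r z y) ∨ (r y t ∧ r x t)) →
    QSO Δ r := by
  intro n
  induction n with
  | zero =>
      intro Δ r hcard hdom hirr hax
      have hΔ : Δ = ∅ := Finset.card_eq_zero.mp (Nat.le_antisymm hcard (Nat.zero_le _))
      subst hΔ
      have hr : r = fun _ _ => False := by
        funext a b
        simp only [eq_iff_iff, iff_false]
        exact fun h => absurd (hdom a b h).1 (Finset.notMem_empty a)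
      rw [hr]
      exact QSO.empty
  | succ n ih =>
      intro Δ r hcard hdom hirr hax
      classical
      rcases Finset.eq_empty_or_nonempty Δ with hΔ | hne
      · subst hΔ
        have hr : r = fun _ _ => False := by
          funext a b
          simp only [eq_iff_iff, iff_false]
          exact fun h => absurd (hdom a b h).1 (Finset.notMem_empty a)
        rw [hr]
        exact QSO.empty
      have htrans : ∀ {x y z : α}, r x y → r y z → r x z := by
        intro x y z hxy hyz
        rcases hax x y y z hxy hyz with ⟨h1, h2⟩ | ⟨h1, h2⟩ | ⟨h1, h2⟩ | ⟨h1, h2⟩ | ⟨h1, h2⟩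
        · exact h1
        · exact h2
        · exact absurd h2 (hirr y)
        · exact absurd h2 (hirr y)
        · exact h2
      have hanti : ∀ {a b : α}, r a b → r b a → False :=
        fun h1 h2 => hirr _ (htrans h1 h2)
      by_cases hiso : ∃ x ∈ Δ, ∀ y, ¬ r x y ∧ ¬ r y x
      · -- isolated element: remove it
        obtain ⟨x, hxΔ, hx⟩ := hiso
        have hdom' : ∀ a b, r a b → a ∈ Δ.erase x ∧ b ∈ Δ.erase x := by
          intro a b hab
          obtain ⟨ha, hb⟩ := hdom a b hab
          refine ⟨Finset.mem_erase.mpr ⟨?_, ha⟩, Finset.mem_erase.mpr ⟨?_, hb⟩⟩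
          · rintro rfl; exact (hx b).1 hab
          · rintro rfl; exact (hx a).2 hab
        have hcard' : (Δ.erase x).card ≤ n := by
          have := Finset.card_erase_of_mem hxΔ
          omega
        have h := QSO.add x (Finset.notMem_erase x Δ) (ih (Δ.erase x) r hcard' hdom' hirr hax)
        rwa [Finset.insert_erase hxΔ] at h
      · -- no isolated element: find a series split
        have hedge : ∀ x ∈ Δ, ∃ y, r x y ∨ r y x := by
          intro x hxΔ
          by_contra hc
          push_neg at hc
          exact hiso ⟨x, hxΔ, hc⟩
        -- a minimal element exists
        obtain ⟨a0, ha0Δ, ha0max⟩ :=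
          Finset.exists_max_image Δ (fun m => (Δ.filter (fun w => r m w)).card) hne
        have ha0min : ∀ z, ¬ r z a0 := by
          intro z hz
          have hzΔ := (hdom z a0 hz).1
          have hsub : Δ.filter (fun w => r a0 w) ⊆ Δ.filter (fun w => r z w) := by
            intro w hw
            rw [Finset.mem_filter] at hw ⊢
            exact ⟨hw.1, htrans hz hw.2⟩
          have hss : Δ.filter (fun w => r a0 w) ⊂ Δ.filter (fun w => r z w) :=
            (Finset.ssubset_iff_of_subset hsub).mpr
              ⟨a0, Finset.mem_filter.mpr ⟨ha0Δ, hz⟩,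
               fun h => hirr a0 (Finset.mem_filter.mp h).2⟩
          exact absurd (ha0max z hzΔ) (not_le.mpr (Finset.card_lt_card hss))
        -- choose a minimal element m0 whose successor set has minimal cardinality
        have hM : a0 ∈ Δ.filter (fun m => ∀ z, ¬ r z m) :=
          Finset.mem_filter.mpr ⟨ha0Δ, ha0min⟩
        obtain ⟨m0, hm0M, hm0min⟩ :=
          Finset.exists_min_image (Δ.filter (fun m => ∀ z, ¬ r z m))
            (fun m => (Δ.filter (fun w => r m w)).card) ⟨a0, hM⟩
        have hm0Δ : m0 ∈ Δ := (Finset.mem_filter.mp hm0M).1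
        have hm0nopred : ∀ z, ¬ r z m0 := (Finset.mem_filter.mp hm0M).2
        set B := Δ.filter (fun w => r m0 w) with hBdef
        set A := Δ \ B with hAdef
        have hm0A : m0 ∈ A := by
          rw [hAdef, Finset.mem_sdiff]
          exact ⟨hm0Δ, fun h => hirr m0 (Finset.mem_filter.mp h).2⟩
        have hBne : B.Nonempty := by
          obtain ⟨y, hy⟩ := hedge m0 hm0Δ
          rcases hy with hy | hy
          · exact ⟨y, Finset.mem_filter.mpr ⟨(hdom m0 y hy).2, hy⟩⟩
          · exact absurd hy (hm0nopred y)
        -- the key split property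
        have key : ∀ a ∈ A, ∀ b ∈ B, r a b := by
          intro a haA b hbB
          rw [hAdef, Finset.mem_sdiff] at haA
          obtain ⟨haΔ, haB⟩ := haA
          have hm0b : r m0 b := (Finset.mem_filter.mp hbB).2
          have hm0a : ¬ r m0 a := fun h => haB (Finset.mem_filter.mpr ⟨haΔ, h⟩)
          by_cases hpred : ∃ z, r z a
          · obtain ⟨z, hz⟩ := hpred
            rcases hax m0 b z a hm0b hz with
              ⟨h1, h2⟩ | ⟨h1, h2⟩ | ⟨h1, h2⟩ | ⟨h1, h2⟩ | ⟨h1, h2⟩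
            · exact absurd h1 hm0a
            · exact absurd h2 hm0a
            · exact absurd h1 (hm0nopred z)
            · exact h1
            · exact absurd h2 hm0a
          · push_neg at hpred
            by_contra hab
            have hsub : Δ.filter (fun w => r a w) ⊆ Δ.filter (fun w => r m0 w) := by
              intro w hw
              rw [Finset.mem_filter] at hw ⊢
              obtain ⟨hwΔ, haw⟩ := hw
              rcases hax a w m0 b haw hm0b with
                ⟨h1, h2⟩ | ⟨h1, h2⟩ | ⟨h1, h2⟩ | ⟨h1, h2⟩ | ⟨h1, h2⟩
              · exact absurd h1 hab
              · exact absurd h2 hab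
              · exact absurd h1 hm0a
              · exact ⟨hwΔ, h2⟩
              · exact absurd h2 hab
            have hss : Δ.filter (fun w => r a w) ⊂ Δ.filter (fun w => r m0 w) :=
              (Finset.ssubset_iff_of_subset hsub).mpr
                ⟨b, Finset.mem_filter.mpr ⟨(hdom m0 b hm0b).2, hm0b⟩,
                 fun h => hab (Finset.mem_filter.mp h).2⟩
            have haM : a ∈ Δ.filter (fun m => ∀ z, ¬ r z m) :=
              Finset.mem_filter.mpr ⟨haΔ, hpred⟩
            exact absurd (hm0min a haM) (not_le.mpr (Finset.card_lt_card hss))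
        have hAB : A ∪ B = Δ := Finset.sdiff_union_of_subset (Finset.filter_subset _ _)
        have hcardA : A.card ≤ n := by
          obtain ⟨b, hbB⟩ := hBne
          have hAss : A ⊂ Δ := by
            refine (Finset.ssubset_iff_of_subset (Finset.sdiff_subset)).mpr
              ⟨b, (Finset.mem_filter.mp hbB).1, ?_⟩
            exact fun h => (Finset.mem_sdiff.mp h).2 hbB
          have := Finset.card_lt_card hAss
          omega
        have hcardB : B.card ≤ n := by
          have hBss : B ⊂ Δ := by
            refine (Finset.ssubset_iff_of_subset (Finset.filter_subset _ _)).mpr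
              ⟨m0, hm0Δ, ?_⟩
            rw [hAdef, Finset.mem_sdiff] at hm0A
            exact hm0A.2
          have := Finset.card_lt_card hBss
          omega
        -- the restricted relations
        have hqA : QSO A (fun a b => r a b ∧ a ∈ A ∧ b ∈ A) := by
          refine ih A _ hcardA (fun a b h => ⟨h.2.1, h.2.2⟩) (fun x h => hirr x h.1) ?_
          rintro x y z t ⟨hxy, hxA, hyA⟩ ⟨hzt, hzA, htA⟩
          rcases hax x y z t hxy hzt with
            ⟨h1, h2⟩ | ⟨h1, h2⟩ | ⟨h1, h2⟩ | ⟨h1, h2⟩ | ⟨h1, h2⟩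
          · exact Or.inl ⟨⟨h1, hxA, htA⟩, ⟨h2, hzA, hyA⟩⟩
          · exact Or.inr (Or.inl ⟨⟨h1, hxA, hzA⟩, ⟨h2, hxA, htA⟩⟩)
          · exact Or.inr (Or.inr (Or.inl ⟨⟨h1, hzA, hxA⟩, ⟨h2, hzA, hyA⟩⟩))
          · exact Or.inr (Or.inr (Or.inr (Or.inl ⟨⟨h1, htA, hyA⟩, ⟨h2, hzA, hyA⟩⟩)))
          · exact Or.inr (Or.inr (Or.inr (Or.inr ⟨⟨h1, hyA, htA⟩, ⟨h2, hxA, htA⟩⟩)))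
        have hqB : QSO B (fun a b => r a b ∧ a ∈ B ∧ b ∈ B) := by
          refine ih B _ hcardB (fun a b h => ⟨h.2.1, h.2.2⟩) (fun x h => hirr x h.1) ?_
          rintro x y z t ⟨hxy, hxA, hyA⟩ ⟨hzt, hzA, htA⟩
          rcases hax x y z t hxy hzt with
            ⟨h1, h2⟩ | ⟨h1, h2⟩ | ⟨h1, h2⟩ | ⟨h1, h2⟩ | ⟨h1, h2⟩
          · exact Or.inl ⟨⟨h1, hxA, htA⟩, ⟨h2, hzA, hyA⟩⟩
          · exact Or.inr (Or.inl ⟨⟨h1, hxA, hzA⟩, ⟨h2, hxA, htA⟩⟩)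
          · exact Or.inr (Or.inr (Or.inl ⟨⟨h1, hzA, hxA⟩, ⟨h2, hzA, hyA⟩⟩))
          · exact Or.inr (Or.inr (Or.inr (Or.inl ⟨⟨h1, htA, hyA⟩, ⟨h2, hzA, hyA⟩⟩)))
          · exact Or.inr (Or.inr (Or.inr (Or.inr ⟨⟨h1, hyA, htA⟩, ⟨h2, hxA, htA⟩⟩)))
        have hdisj : Disjoint A B := Finset.sdiff_disjoint
        have hcomp := QSO.comp hdisj hqA hqB
        have hEq : (fun a b => (r a b ∧ a ∈ A ∧ b ∈ A) ∨ (r a b ∧ a ∈ B ∧ b ∈ B) ∨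
            (a ∈ A ∧ b ∈ B)) = r := by
          funext a b
          simp only [eq_iff_iff]
          constructor
          · rintro (h | h | ⟨ha, hb⟩)
            · exact h.1
            · exact h.1
            · exact key a ha b hb
          · intro h
            obtain ⟨haΔ, hbΔ⟩ := hdom a b h
            by_cases haB : a ∈ B <;> by_cases hbB : b ∈ B
            · exact Or.inr (Or.inl ⟨h, haB, hbB⟩)
            · have hbA : b ∈ A := by rw [hAdef, Finset.mem_sdiff]; exact ⟨hbΔ, hbB⟩
              exact absurd (key b hbA a haB) (fun h' => hanti h h')
            · exact Or.inr (Or.inr ⟨by rw [hAdef, Finset.mem_sdiff]; exact ⟨haΔ, haB⟩, hbB⟩)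
            · exact Or.inl ⟨h, by rw [hAdef, Finset.mem_sdiff]; exact ⟨haΔ, haB⟩,
                by rw [hAdef, Finset.mem_sdiff]; exact ⟨hbΔ, hbB⟩⟩
        rw [hAB, hEq] at hcomp
        exact hcomp

end QSOaux

/-- A finite irreflexive relation is a quasi-stratified order
iff it satisfies QSO2. -/
theorem qso_iff_axioms {α : Type*} [DecidableEq α]
    (Δ : Finset α) (r : α → α → Prop)
    (hdom : ∀ a b, r a b → a ∈ Δ ∧ b ∈ Δ) :
    QSO Δ r ↔
      ((∀ x, ¬ r x x) ∧
       (∀ x y z t, r x y → r z t →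
          (r x t ∧ r z y) ∨ (r x z ∧ r x t) ∨ (r z x ∧ r z y) ∨
          (r t y ∧ r z y) ∨ (r y t ∧ r x t))) := by
  constructor
  · intro h
    exact ⟨QSOaux.irrefl' h, QSOaux.ax2 h⟩
  · rintro ⟨h1, h2⟩
    exact QSOaux.of_axioms Δ.card Δ r le_rfl hdom h1 h2
end

section
/- Every quasi-stratified order is an interval order: if x ≺ y and z ≺ t then x ≺ t or z ≺ y. -/
theorem qso_mem {α : Type*} [DecidableEq α] {Δ : Finset α} {r : α → α → Prop}
    (h : QSO Δ r) : ∀ a b, r a b → a ∈ Δ ∧ b ∈ Δ := by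
  induction h with
  | empty => intro a b hab; exact hab.elim
  | add x hx _ ih =>
      intro a b hab
      obtain ⟨ha, hb⟩ := ih a b hab
      exact ⟨Finset.mem_insert_of_mem ha, Finset.mem_insert_of_mem hb⟩
  | comp hd _ _ ih ih' =>
      intro a b hab
      rcases hab with hab | hab | ⟨ha, hb⟩
      · obtain ⟨ha, hb⟩ := ih a b hab
        exact ⟨Finset.mem_union_left _ ha, Finset.mem_union_left _ hb⟩
      · obtain ⟨ha, hb⟩ := ih' a b hab
        exact ⟨Finset.mem_union_right _ ha, Finset.mem_union_right _ hb⟩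
      · exact ⟨Finset.mem_union_left _ ha, Finset.mem_union_right _ hb⟩

/-- Every quasi-stratified order is an interval order. -/
theorem qso_is_interval {α : Type*} [DecidableEq α]
    (Δ : Finset α) (r : α → α → Prop) (h : QSO Δ r) :
    ∀ x y z t, r x y → r z t → r x t ∨ r z y := by
  induction h with
  | empty => intro x y z t hxy; exact hxy.elim
  | add _ _ _ ih => exact ih
  | comp hd h1 h2 ih ih' =>
      intro x y z t hxy hzt
      have disj : ∀ a, a ∈ _ → a ∈ _ → False := fun a ha hb =>
        Finset.disjoint_left.mp hd ha hb
      rcases hxy with hxy | hxy | ⟨hx, hy⟩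
      · rcases hzt with hzt | hzt | ⟨hz, ht⟩
        · rcases ih x y z t hxy hzt with h | h
          · exact Or.inl (Or.inl h)
          · exact Or.inr (Or.inl h)
        · exact Or.inl (Or.inr (Or.inr ⟨(qso_mem h1 x y hxy).1, (qso_mem h2 z t hzt).2⟩))
        · exact Or.inl (Or.inr (Or.inr ⟨(qso_mem h1 x y hxy).1, ht⟩))
      · rcases hzt with hzt | hzt | ⟨hz, ht⟩
        · exact Or.inr (Or.inr (Or.inr ⟨(qso_mem h1 z t hzt).1, (qso_mem h2 x y hxy).2⟩))
        · rcases ih' x y z t hxy hzt with h | h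
          · exact Or.inl (Or.inr (Or.inl h))
          · exact Or.inr (Or.inr (Or.inl h))
        · exact Or.inr (Or.inr (Or.inr ⟨hz, (qso_mem h2 x y hxy).2⟩))
      · rcases hzt with hzt | hzt | ⟨hz, ht⟩
        · exact Or.inr (Or.inr (Or.inr ⟨(qso_mem h1 z t hzt).1, hy⟩))
        · exact Or.inl (Or.inr (Or.inr ⟨hx, (qso_mem h2 z t hzt).2⟩))
        · exact Or.inl (Or.inr (Or.inr ⟨hx, ht⟩))
end

section
/- Every nonempty QS-order can be written uniquely as a sequential composition qso₁ ∘ ⋯ ∘ qsoₙ (n ≥ 1) of QSO-strata. -/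
/-- A QSO-stratum: a QS-order of the form qso'[x] for a QS-order qso' and fresh x. -/
def IsQSOStratum {α : Type*} [DecidableEq α] (Δ : Finset α) (r : α → α → Prop) : Prop :=
  ∃ (Δ' : Finset α) (x : α), x ∉ Δ' ∧ QSO Δ' r ∧ Δ = insert x Δ'

/-- Sequential composition of a list of (domain, relation) pairs. -/
def seqComp {α : Type*} [DecidableEq α] :
    List (Finset α × (α → α → Prop)) → Finset α × (α → α → Prop)
  | [] => (∅, fun _ _ => False)
  | p :: L =>
    let q := seqComp L
    (p.1 ∪ q.1, fun a b => p.2 a b ∨ q.2 a b ∨ (a ∈ p.1 ∧ b ∈ q.1))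

section Aux

variable {α : Type*} [DecidableEq α]

lemma QSO.mem_of_rel {Δ : Finset α} {r : α → α → Prop} (h : QSO Δ r) :
    ∀ a b, r a b → a ∈ Δ ∧ b ∈ Δ := by
  induction h with
  | empty => exact fun a b hab => hab.elim
  | add x hx _ ih =>
      exact fun a b hab => ⟨Finset.mem_insert_of_mem (ih a b hab).1,
        Finset.mem_insert_of_mem (ih a b hab).2⟩
  | comp hd _ _ ih1 ih2 =>
      intro a b hab
      rcases hab with hab | hab | ⟨ha, hb⟩
      · exact ⟨Finset.mem_union_left _ (ih1 a b hab).1, Finset.mem_union_left _ (ih1 a b hab).2⟩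
      · exact ⟨Finset.mem_union_right _ (ih2 a b hab).1, Finset.mem_union_right _ (ih2 a b hab).2⟩
      · exact ⟨Finset.mem_union_left _ ha, Finset.mem_union_right _ hb⟩

lemma IsQSOStratum.qso {Δ : Finset α} {r : α → α → Prop} (h : IsQSOStratum Δ r) : QSO Δ r := by
  obtain ⟨Δ', x, hx, hq, rfl⟩ := h
  exact QSO.add x hx hq

lemma IsQSOStratum.nonempty {Δ : Finset α} {r : α → α → Prop} (h : IsQSOStratum Δ r) :
    Δ.Nonempty := by
  obtain ⟨Δ', x, hx, hq, rfl⟩ := h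
  exact Finset.insert_nonempty _ _

lemma seqComp_cons (p : Finset α × (α → α → Prop)) (L : List (Finset α × (α → α → Prop))) :
    seqComp (p :: L) = (p.1 ∪ (seqComp L).1,
      fun a b => p.2 a b ∨ (seqComp L).2 a b ∨ (a ∈ p.1 ∧ b ∈ (seqComp L).1)) := rfl

lemma mem_seqComp_fst {L : List (Finset α × (α → α → Prop))} {a : α} :
    a ∈ (seqComp L).1 ↔ ∃ p ∈ L, a ∈ p.1 := by
  induction L with
  | nil => simp [seqComp]
  | cons p L ih => simp [seqComp_cons, Finset.mem_union, ih]

lemma disjoint_head_tail {p : Finset α × (α → α → Prop)} {L : List (Finset α × (α → α → Prop))}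
    (h : (p :: L).Pairwise (fun p q => Disjoint p.1 q.1)) :
    Disjoint p.1 (seqComp L).1 := by
  rw [Finset.disjoint_left]
  intro a ha ha2
  obtain ⟨q, hq, haq⟩ := mem_seqComp_fst.1 ha2
  exact (Finset.disjoint_left.1 ((List.pairwise_cons.1 h).1 q hq) ha) haq

lemma seqComp_qso {L : List (Finset α × (α → α → Prop))}
    (h1 : ∀ p ∈ L, QSO p.1 p.2) (h2 : L.Pairwise (fun p q => Disjoint p.1 q.1)) :
    QSO (seqComp L).1 (seqComp L).2 := by
  induction L with
  | nil => exact QSO.empty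
  | cons p L ih =>
      exact QSO.comp (disjoint_head_tail h2) (h1 p (List.mem_cons_self))
        (ih (fun q hq => h1 q (List.mem_cons_of_mem _ hq)) (List.pairwise_cons.1 h2).2)

lemma seqComp_append (L M : List (Finset α × (α → α → Prop))) :
    seqComp (L ++ M) = ((seqComp L).1 ∪ (seqComp M).1,
      fun a b => (seqComp L).2 a b ∨ (seqComp M).2 a b ∨
        (a ∈ (seqComp L).1 ∧ b ∈ (seqComp M).1)) := by
  induction L with
  | nil =>
      refine Prod.ext ?_ ?_
      · simp [seqComp]
      · funext a b
        apply propext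
        simp [seqComp]
  | cons p L ih =>
      refine Prod.ext ?_ ?_
      · show p.1 ∪ (seqComp (L ++ M)).1 = _
        rw [ih]
        simp [seqComp_cons, Finset.union_assoc]
      · funext a b
        apply propext
        show p.2 a b ∨ (seqComp (L ++ M)).2 a b ∨ (a ∈ p.1 ∧ b ∈ (seqComp (L ++ M)).1) ↔ _
        rw [ih]
        simp only [seqComp_cons, Finset.mem_union]
        tauto

lemma exists_decomp {Δ : Finset α} {r : α → α → Prop} (h : QSO Δ r) :
    Δ.Nonempty → ∃ L : List (Finset α × (α → α → Prop)),
      L ≠ [] ∧ (∀ p ∈ L, IsQSOStratum p.1 p.2) ∧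
      L.Pairwise (fun p q => Disjoint p.1 q.1) ∧ seqComp L = (Δ, r) := by
  induction h with
  | empty => intro h; exact absurd h (by simp)
  | add x hx hq ih =>
      rename_i Δ r
      intro _
      refine ⟨[(insert x Δ, r)], by simp, ?_, by simp, ?_⟩
      · intro p hp
        simp only [List.mem_singleton] at hp
        subst hp
        exact ⟨Δ, x, hx, hq, rfl⟩
      · refine Prod.ext ?_ ?_
        · simp [seqComp]
        · funext a b
          apply propext
          simp [seqComp]
  | comp hd hq1 hq2 ih1 ih2 =>
      rename_i Δ Δ' r r'
      intro hne
      rcases Δ.eq_empty_or_nonempty with hΔ | hΔ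
      · subst hΔ
        have hΔ' : Δ'.Nonempty := by simpa using hne
        obtain ⟨L, hL1, hL2, hL3, hL4⟩ := ih2 hΔ'
        refine ⟨L, hL1, hL2, hL3, ?_⟩
        rw [hL4]
        refine Prod.ext (by simp) ?_
        funext a b
        apply propext
        constructor
        · exact fun h => Or.inr (Or.inl h)
        · rintro (h | h | ⟨ha, hb⟩)
          · exact absurd (hq1.mem_of_rel a b h).1 (by simp)
          · exact h
          · exact absurd ha (by simp)
      · rcases Δ'.eq_empty_or_nonempty with hΔ' | hΔ'
        · subst hΔ'
          obtain ⟨L, hL1, hL2, hL3, hL4⟩ := ih1 hΔ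
          refine ⟨L, hL1, hL2, hL3, ?_⟩
          rw [hL4]
          refine Prod.ext (by simp) ?_
          funext a b
          apply propext
          constructor
          · exact fun h => Or.inl h
          · rintro (h | h | ⟨ha, hb⟩)
            · exact h
            · exact absurd (hq2.mem_of_rel a b h).1 (by simp)
            · exact absurd hb (by simp)
        · obtain ⟨L, hL1, hL2, hL3, hL4⟩ := ih1 hΔ
          obtain ⟨M, hM1, hM2, hM3, hM4⟩ := ih2 hΔ'
          refine ⟨L ++ M, by simp [hL1], ?_, ?_, ?_⟩
          · intro p hp
            rcases List.mem_append.1 hp with hp | hp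
            · exact hL2 p hp
            · exact hM2 p hp
          · rw [List.pairwise_append]
            refine ⟨hL3, hM3, ?_⟩
            intro p hp q hq
            have hpΔ : p.1 ⊆ Δ := by
              intro a ha
              have : a ∈ (seqComp L).1 := mem_seqComp_fst.2 ⟨p, hp, ha⟩
              rwa [hL4] at this
            have hqΔ' : q.1 ⊆ Δ' := by
              intro a ha
              have : a ∈ (seqComp M).1 := mem_seqComp_fst.2 ⟨q, hq, ha⟩
              rwa [hM4] at this
            exact Finset.disjoint_of_subset_left hpΔ (Finset.disjoint_of_subset_right hqΔ' hd)
          · rw [seqComp_append, hL4, hM4]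

lemma head_char {p : Finset α × (α → α → Prop)} {L : List (Finset α × (α → α → Prop))}
    (hs : IsQSOStratum p.1 p.2)
    (hq : QSO (seqComp L).1 (seqComp L).2)
    (hd : Disjoint p.1 (seqComp L).1) :
    (∀ b, b ∈ p.1 ↔ b ∈ (seqComp (p :: L)).1 ∧ ∃ a ∈ (seqComp (p :: L)).1,
        (∀ c, ¬ (seqComp (p :: L)).2 c a) ∧ ¬ (seqComp (p :: L)).2 a b) ∧
    (∀ a b, p.2 a b ↔ ((seqComp (p :: L)).2 a b ∧ a ∈ p.1 ∧ b ∈ p.1)) ∧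
    ((seqComp L).1 = (seqComp (p :: L)).1 \ p.1) ∧
    (∀ a b, (seqComp L).2 a b ↔
      ((seqComp (p :: L)).2 a b ∧ a ∈ (seqComp L).1 ∧ b ∈ (seqComp L).1)) := by
  obtain ⟨Δ', x, hx, hq', hS⟩ := hs
  have hxp : x ∈ p.1 := by rw [hS]; exact Finset.mem_insert_self _ _
  have hsub : Δ' ⊆ p.1 := by rw [hS]; exact Finset.subset_insert _ _
  have hx2 : x ∉ (seqComp L).1 := fun h => Finset.disjoint_left.1 hd hxp h
  have hx' : x ∉ Δ' := hx
  simp only [seqComp_cons, Finset.mem_union]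
  -- the combined relation
  have hR : ∀ a b : α, (p.2 a b ∨ (seqComp L).2 a b ∨ (a ∈ p.1 ∧ b ∈ (seqComp L).1)) →
      (a ∈ p.1 ∨ a ∈ (seqComp L).1) ∧ (b ∈ p.1 ∨ b ∈ (seqComp L).1) := by
    intro a b hab
    rcases hab with h | h | ⟨ha, hb⟩
    · exact ⟨Or.inl (hsub (hq'.mem_of_rel a b h).1), Or.inl (hsub (hq'.mem_of_rel a b h).2)⟩
    · exact ⟨Or.inr (hq.mem_of_rel a b h).1, Or.inr (hq.mem_of_rel a b h).2⟩
    · exact ⟨Or.inl ha, Or.inr hb⟩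
  have hsource : ∀ c, ¬ (p.2 c x ∨ (seqComp L).2 c x ∨ (c ∈ p.1 ∧ x ∈ (seqComp L).1)) := by
    intro c hc
    rcases hc with h | h | ⟨_, h⟩
    · exact hx' (hq'.mem_of_rel c x h).2
    · exact hx2 (hq.mem_of_rel c x h).2
    · exact hx2 h
  have hxfwd : ∀ b ∈ p.1, ¬ (p.2 x b ∨ (seqComp L).2 x b ∨ (x ∈ p.1 ∧ b ∈ (seqComp L).1)) := by
    intro b hb h
    rcases h with h | h | ⟨_, h⟩
    · exact hx' (hq'.mem_of_rel x b h).1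
    · exact hx2 (hq.mem_of_rel x b h).1
    · exact Finset.disjoint_left.1 hd hb h
  refine ⟨?_, ?_, ?_, ?_⟩
  · intro b
    constructor
    · intro hb
      refine ⟨Or.inl hb, x, Or.inl hxp, hsource, hxfwd b hb⟩
    · rintro ⟨hb, a, ha, hasrc, hnab⟩
      have hap : a ∈ p.1 := by
        by_contra hap
        rcases ha with ha | ha
        · exact hap ha
        · exact hasrc x (Or.inr (Or.inr ⟨hxp, ha⟩))
      by_contra hbp
      rcases hb with hb | hb
      · exact hbp hb
      · exact hnab (Or.inr (Or.inr ⟨hap, hb⟩))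
  · intro a b
    constructor
    · intro h
      exact ⟨Or.inl h, hsub (hq'.mem_of_rel a b h).1, hsub (hq'.mem_of_rel a b h).2⟩
    · rintro ⟨h, hap, hbp⟩
      rcases h with h | h | ⟨_, hb⟩
      · exact h
      · exact absurd (hq.mem_of_rel a b h).1 (fun h2 => Finset.disjoint_left.1 hd hap h2)
      · exact absurd hb (fun h2 => Finset.disjoint_left.1 hd hbp h2)
  · ext a
    simp only [Finset.mem_sdiff, Finset.mem_union]
    constructor
    · intro ha
      exact ⟨Or.inr ha, fun hap => Finset.disjoint_left.1 hd hap ha⟩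
    · rintro ⟨ha | ha, hap⟩
      · exact absurd ha hap
      · exact ha
  · intro a b
    constructor
    · intro h
      exact ⟨Or.inr (Or.inl h), (hq.mem_of_rel a b h).1, (hq.mem_of_rel a b h).2⟩
    · rintro ⟨h, ha2, hb2⟩
      rcases h with h | h | ⟨hap, _⟩
      · exact absurd (hsub (hq'.mem_of_rel a b h).1)
          (fun h2 => Finset.disjoint_left.1 hd h2 ha2)
      · exact h
      · exact absurd hap (fun h2 => Finset.disjoint_left.1 hd h2 ha2)

lemma decomp_unique : ∀ (L M : List (Finset α × (α → α → Prop))),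
    (∀ p ∈ L, IsQSOStratum p.1 p.2) → L.Pairwise (fun p q => Disjoint p.1 q.1) →
    (∀ p ∈ M, IsQSOStratum p.1 p.2) → M.Pairwise (fun p q => Disjoint p.1 q.1) →
    seqComp L = seqComp M → L = M := by
  intro L
  induction L with
  | nil =>
      intro M _ _ hM _ h
      cases M with
      | nil => rfl
      | cons q M =>
          exfalso
          obtain ⟨a, ha⟩ := (hM q (List.mem_cons_self)).nonempty
          have : a ∈ (seqComp (q :: M)).1 := mem_seqComp_fst.2 ⟨q, List.mem_cons_self, ha⟩
          rw [← h] at this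
          simp [seqComp] at this
  | cons p L ih =>
      intro M hL hLd hM hMd h
      cases M with
      | nil =>
          exfalso
          obtain ⟨a, ha⟩ := (hL p (List.mem_cons_self)).nonempty
          have : a ∈ (seqComp (p :: L)).1 := mem_seqComp_fst.2 ⟨p, List.mem_cons_self, ha⟩
          rw [h] at this
          simp [seqComp] at this
      | cons q M =>
          have hLtail : ∀ p' ∈ L, IsQSOStratum p'.1 p'.2 :=
            fun p' hp' => hL p' (List.mem_cons_of_mem _ hp')
          have hMtail : ∀ p' ∈ M, IsQSOStratum p'.1 p'.2 :=
            fun p' hp' => hM p' (List.mem_cons_of_mem _ hp')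
          have hLq : QSO (seqComp L).1 (seqComp L).2 :=
            seqComp_qso (fun p' hp' => (hLtail p' hp').qso) (List.pairwise_cons.1 hLd).2
          have hMq : QSO (seqComp M).1 (seqComp M).2 :=
            seqComp_qso (fun p' hp' => (hMtail p' hp').qso) (List.pairwise_cons.1 hMd).2
          obtain ⟨cP1, cP2, cP3, cP4⟩ :=
            head_char (hL p (List.mem_cons_self)) hLq (disjoint_head_tail hLd)
          obtain ⟨cQ1, cQ2, cQ3, cQ4⟩ :=
            head_char (hM q (List.mem_cons_self)) hMq (disjoint_head_tail hMd)
          rw [← h] at cQ1 cQ2 cQ3 cQ4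
          have e1 : p.1 = q.1 := Finset.ext fun b => (cP1 b).trans (cQ1 b).symm
          have e2 : p.2 = q.2 := by
            funext a b
            apply propext
            rw [cP2 a b, cQ2 a b, e1]
          have e3a : (seqComp L).1 = (seqComp M).1 := by rw [cP3, cQ3, e1]
          have e3 : seqComp L = seqComp M := by
            refine Prod.ext e3a ?_
            funext a b
            apply propext
            rw [cP4 a b, cQ4 a b, e3a]
          have etail : L = M := ih M hLtail (List.pairwise_cons.1 hLd).2 hMtail
            (List.pairwise_cons.1 hMd).2 e3
          rw [etail, Prod.ext e1 e2]

end Aux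

/-- Every nonempty QS-order can be written uniquely as a sequential
composition of QSO-strata (with pairwise disjoint domains). -/
theorem unique_strata_decomposition {α : Type*} [DecidableEq α]
    (Δ : Finset α) (r : α → α → Prop) (h : QSO Δ r) (hne : Δ.Nonempty) :
    ∃! L : List (Finset α × (α → α → Prop)),
      L ≠ [] ∧
      (∀ p ∈ L, IsQSOStratum p.1 p.2) ∧
      L.Pairwise (fun p q => Disjoint p.1 q.1) ∧
      seqComp L = (Δ, r) := by
  obtain ⟨L, hL1, hL2, hL3, hL4⟩ := exists_decomp h hne
  refine ⟨L, ⟨hL1, hL2, hL3, hL4⟩, ?_⟩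
  rintro M ⟨_, hM2, hM3, hM4⟩
  exact decomp_unique M L hM2 hM3 hL2 hL3 (hM4.trans hL4.symm)
end

section
/- A structure (Δ,≺,⊏) is a QSM-structure if and only if (Δ,≺) is a QS-order and ⊏ = {(x,y) ∈ Δ×Δ : y ⊀ x and x ≠ y}. -/
lemma QSO_congr {α : Type*} [DecidableEq α] {Δ : Finset α} {p q : α → α → Prop}
    (h : QSO Δ p) (e : ∀ a b, p a b ↔ q a b) : QSO Δ q := by
  have hpq : p = q := funext fun a => funext fun b => propext (e a b)
  exact hpq ▸ h

/-- Easy direction: any QSO satisfies confinement, irreflexivity and QSMS4. -/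
lemma QSO_axioms {α : Type*} [DecidableEq α] {Δ : Finset α} {p : α → α → Prop}
    (h : QSO Δ p) :
    (∀ a b, p a b → a ∈ Δ ∧ b ∈ Δ) ∧ (∀ x, ¬ p x x) ∧
    (∀ x y z t, p x y → p z t →
        (p x t ∧ p z y) ∨ (p x z ∧ p x t) ∨ (p z x ∧ p z y) ∨
        (p t y ∧ p z y) ∨ (p y t ∧ p x t)) := by
  induction h with
  | empty => exact ⟨fun a b h => h.elim, fun x h => h, fun x y z t h => h.elim⟩
  | add x hx h ih =>
      refine ⟨fun a b hab => ?_, ih.2.1, ih.2.2⟩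
      obtain ⟨ha, hb⟩ := ih.1 a b hab
      exact ⟨Finset.mem_insert_of_mem ha, Finset.mem_insert_of_mem hb⟩
  | comp hd h h' ih ih' =>
      obtain ⟨c1, i1, f1⟩ := ih
      obtain ⟨c2, i2, f2⟩ := ih'
      have hnot : ∀ a, a ∈ _ → a ∉ _ := fun a ha ha' => Finset.disjoint_left.mp hd ha ha'
      refine ⟨?_, ?_, ?_⟩
      · rintro a b (hab | hab | ⟨ha, hb⟩)
        · exact ⟨Finset.mem_union_left _ (c1 a b hab).1, Finset.mem_union_left _ (c1 a b hab).2⟩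
        · exact ⟨Finset.mem_union_right _ (c2 a b hab).1, Finset.mem_union_right _ (c2 a b hab).2⟩
        · exact ⟨Finset.mem_union_left _ ha, Finset.mem_union_right _ hb⟩
      · rintro x (hxx | hxx | ⟨hx, hx'⟩)
        · exact i1 x hxx
        · exact i2 x hxx
        · exact hnot x hx hx'
      · rintro x y z t (hxy | hxy | ⟨hx, hy⟩) (hzt | hzt | ⟨hz, ht⟩)
        · rcases f1 x y z t hxy hzt with ⟨a, b⟩ | ⟨a, b⟩ | ⟨a, b⟩ | ⟨a, b⟩ | ⟨a, b⟩
          · exact Or.inl ⟨Or.inl a, Or.inl b⟩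
          · exact Or.inr (Or.inl ⟨Or.inl a, Or.inl b⟩)
          · exact Or.inr (Or.inr (Or.inl ⟨Or.inl a, Or.inl b⟩))
          · exact Or.inr (Or.inr (Or.inr (Or.inl ⟨Or.inl a, Or.inl b⟩)))
          · exact Or.inr (Or.inr (Or.inr (Or.inr ⟨Or.inl a, Or.inl b⟩)))
        · -- x,y ∈ Δ ; z,t ∈ Δ' : disjunct 5 : p y t ∧ p x t
          exact Or.inr (Or.inr (Or.inr (Or.inr
            ⟨Or.inr (Or.inr ⟨(c1 x y hxy).2, (c2 z t hzt).2⟩),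
             Or.inr (Or.inr ⟨(c1 x y hxy).1, (c2 z t hzt).2⟩)⟩)))
        · -- x,y ∈ Δ ; z ∈ Δ, t ∈ Δ' : disjunct 5
          exact Or.inr (Or.inr (Or.inr (Or.inr
            ⟨Or.inr (Or.inr ⟨(c1 x y hxy).2, ht⟩),
             Or.inr (Or.inr ⟨(c1 x y hxy).1, ht⟩)⟩)))
        · -- x,y ∈ Δ' ; z,t ∈ Δ : disjunct 3 : p z x ∧ p z y
          exact Or.inr (Or.inr (Or.inl
            ⟨Or.inr (Or.inr ⟨(c1 z t hzt).1, (c2 x y hxy).1⟩),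
             Or.inr (Or.inr ⟨(c1 z t hzt).1, (c2 x y hxy).2⟩)⟩))
        · rcases f2 x y z t hxy hzt with ⟨a, b⟩ | ⟨a, b⟩ | ⟨a, b⟩ | ⟨a, b⟩ | ⟨a, b⟩
          · exact Or.inl ⟨Or.inr (Or.inl a), Or.inr (Or.inl b)⟩
          · exact Or.inr (Or.inl ⟨Or.inr (Or.inl a), Or.inr (Or.inl b)⟩)
          · exact Or.inr (Or.inr (Or.inl ⟨Or.inr (Or.inl a), Or.inr (Or.inl b)⟩))
          · exact Or.inr (Or.inr (Or.inr (Or.inl ⟨Or.inr (Or.inl a), Or.inr (Or.inl b)⟩)))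
          · exact Or.inr (Or.inr (Or.inr (Or.inr ⟨Or.inr (Or.inl a), Or.inr (Or.inl b)⟩)))
        · -- x,y ∈ Δ' ; z ∈ Δ, t ∈ Δ' : disjunct 3
          exact Or.inr (Or.inr (Or.inl
            ⟨Or.inr (Or.inr ⟨hz, (c2 x y hxy).1⟩),
             Or.inr (Or.inr ⟨hz, (c2 x y hxy).2⟩)⟩))
        · -- x ∈ Δ, y ∈ Δ' ; z,t ∈ Δ : disjunct 4 : p t y ∧ p z y
          exact Or.inr (Or.inr (Or.inr (Or.inl
            ⟨Or.inr (Or.inr ⟨(c1 z t hzt).2, hy⟩),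
             Or.inr (Or.inr ⟨(c1 z t hzt).1, hy⟩)⟩)))
        · -- x ∈ Δ, y ∈ Δ' ; z,t ∈ Δ' : disjunct 2 : p x z ∧ p x t
          exact Or.inr (Or.inl
            ⟨Or.inr (Or.inr ⟨hx, (c2 z t hzt).1⟩),
             Or.inr (Or.inr ⟨hx, (c2 z t hzt).2⟩)⟩)
        · -- both cross : disjunct 1 : p x t ∧ p z y
          exact Or.inl ⟨Or.inr (Or.inr ⟨hx, ht⟩), Or.inr (Or.inr ⟨hz, hy⟩)⟩

/-- Hard direction: confinement + irreflexivity + QSMS4 imply QSO. -/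
lemma QSO_of_axioms {α : Type*} [DecidableEq α] :
    ∀ (n : ℕ) (Δ : Finset α) (p : α → α → Prop), Δ.card ≤ n →
    (∀ a b, p a b → a ∈ Δ ∧ b ∈ Δ) →
    (∀ x, ¬ p x x) →
    (∀ x y z t, p x y → p z t →
        (p x t ∧ p z y) ∨ (p x z ∧ p x t) ∨ (p z x ∧ p z y) ∨
        (p t y ∧ p z y) ∨ (p y t ∧ p x t)) →
    QSO Δ p := by
  intro n
  induction n with
  | zero =>
      intro Δ p hcard hp _ _
      have hΔ : Δ = ∅ := Finset.card_eq_zero.mp (Nat.le_zero.mp hcard)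
      subst hΔ
      exact QSO_congr QSO.empty (fun a b =>
        ⟨fun h => h.elim, fun h => absurd (hp a b h).1 (Finset.notMem_empty a)⟩)
  | succ n ih =>
      intro Δ p hcard hp hirr h4
      classical
      -- derived facts
      have asym : ∀ a b, p a b → ¬ p b a := by
        intro a b hab hba
        rcases h4 a b b a hab hba with ⟨h, _⟩ | ⟨_, h⟩ | ⟨_, h⟩ | ⟨_, h⟩ | ⟨_, h⟩
        · exact hirr a h
        · exact hirr a h
        · exact hirr b h
        · exact hirr b h
        · exact hirr a h
      have trans : ∀ x y z, p z x → p x y → p z y := by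
        intro x y z hzx hxy
        rcases h4 x y z x hxy hzx with ⟨h, _⟩ | ⟨_, h⟩ | ⟨_, h⟩ | ⟨_, h⟩ | ⟨h, _⟩
        · exact absurd h (hirr x)
        · exact absurd h (hirr x)
        · exact h
        · exact h
        · exact absurd h (asym x y hxy)
      rcases Finset.eq_empty_or_nonempty Δ with hΔ | hΔne
      · subst hΔ
        exact QSO_congr QSO.empty (fun a b =>
          ⟨fun h => h.elim, fun h => absurd (hp a b h).1 (Finset.notMem_empty a)⟩)
      by_cases hiso : ∃ x ∈ Δ, ∀ y, ¬ p x y ∧ ¬ p y x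
      · obtain ⟨x, hxΔ, hx⟩ := hiso
        have hp' : ∀ a b, p a b → a ∈ Δ.erase x ∧ b ∈ Δ.erase x := by
          intro a b hab
          obtain ⟨ha, hb⟩ := hp a b hab
          refine ⟨Finset.mem_erase.mpr ⟨?_, ha⟩, Finset.mem_erase.mpr ⟨?_, hb⟩⟩
          · rintro rfl; exact (hx b).1 hab
          · rintro rfl; exact (hx a).2 hab
        have hcard' : (Δ.erase x).card ≤ n := by
          have h1 := Finset.card_erase_of_mem hxΔ
          have h2 := Finset.card_pos.mpr ⟨x, hxΔ⟩
          omega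
        have h := ih (Δ.erase x) p hcard' hp' hirr h4
        have := QSO.add x (Finset.notMem_erase x Δ) h
        rwa [Finset.insert_erase hxΔ] at this
      · -- no isolated element
        push_neg at hiso
        -- a minimal element exists
        obtain ⟨m₀, hm₀Δ, hm₀⟩ := Finset.exists_min_image Δ
          (fun x => (Δ.filter (fun y => p y x)).card) hΔne
        have hm₀min : ∀ c, ¬ p c m₀ := by
          intro c hc
          have hcΔ : c ∈ Δ := (hp c m₀ hc).1
          have hsub : Δ.filter (fun y => p y c) ⊆ Δ.filter (fun y => p y m₀) := by
            intro y hy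
            simp only [Finset.mem_filter] at *
            exact ⟨hy.1, trans c m₀ y hy.2 hc⟩
          have hss : Δ.filter (fun y => p y c) ⊂ Δ.filter (fun y => p y m₀) := by
            refine Finset.ssubset_def.mpr ⟨hsub, fun hsup => ?_⟩
            have : c ∈ Δ.filter (fun y => p y c) :=
              hsup (Finset.mem_filter.mpr ⟨hcΔ, hc⟩)
            exact hirr c (Finset.mem_filter.mp this).2
          exact absurd (Finset.card_lt_card hss) (not_lt.mpr (hm₀ c hcΔ))
        -- minimal elements
        set M := Δ.filter (fun x => ∀ y, ¬ p y x) with hM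
        have hMne : M.Nonempty := ⟨m₀, Finset.mem_filter.mpr ⟨hm₀Δ, hm₀min⟩⟩
        obtain ⟨m, hmM, hmmin⟩ := Finset.exists_min_image M
          (fun x => (Δ.filter (fun y => p x y)).card) hMne
        have hmΔ : m ∈ Δ := (Finset.mem_filter.mp hmM).1
        have hmlow : ∀ c, ¬ p c m := (Finset.mem_filter.mp hmM).2
        set B := Δ.filter (fun y => p m y) with hB
        set A := Δ \ B with hA
        have hBne : B.Nonempty := by
          obtain ⟨y, hy⟩ := hiso m hmΔ
          by_cases hmy : p m y
          · exact ⟨y, Finset.mem_filter.mpr ⟨(hp m y hmy).2, hmy⟩⟩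
          · exact absurd (hy hmy) (hmlow y)
        have hmA : m ∈ A := Finset.mem_sdiff.mpr ⟨hmΔ, fun hc =>
          hirr m (Finset.mem_filter.mp hc).2⟩
        -- the cut property
        have hcut : ∀ a ∈ A, ∀ b ∈ B, p a b := by
          intro a haA b hbB
          obtain ⟨haΔ, haB⟩ := Finset.mem_sdiff.mp haA
          have hma : ¬ p m a := fun h => haB (Finset.mem_filter.mpr ⟨haΔ, h⟩)
          have hmb : p m b := (Finset.mem_filter.mp hbB).2
          by_cases hca : ∃ c, p c a
          · obtain ⟨c, hc⟩ := hca
            rcases h4 c a m b hc hmb with ⟨_, h⟩ | ⟨h, _⟩ | ⟨_, h⟩ | ⟨h, _⟩ | ⟨h, _⟩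
            · exact absurd h hma
            · exact absurd h (hmlow c)
            · exact absurd h hma
            · exact absurd (trans b a m hmb h) hma
            · exact h
          · push_neg at hca
            -- a is minimal; use minimality of U(m)
            by_contra hab
            have haM : a ∈ M := Finset.mem_filter.mpr ⟨haΔ, hca⟩
            -- U(a) ⊆ U(m)
            have hUsub : Δ.filter (fun y => p a y) ⊆ Δ.filter (fun y => p m y) := by
              intro w hw
              obtain ⟨hwΔ, haw⟩ := Finset.mem_filter.mp hw
              refine Finset.mem_filter.mpr ⟨hwΔ, ?_⟩
              by_contra hmw
              rcases h4 m b a w hmb haw with ⟨h, _⟩ | ⟨_, h⟩ | ⟨_, h⟩ | ⟨_, h⟩ | ⟨_, h⟩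
              · exact hmw h
              · exact hmw h
              · exact hab h
              · exact hab h
              · exact hmw h
            have hss : Δ.filter (fun y => p a y) ⊂ Δ.filter (fun y => p m y) := by
              refine Finset.ssubset_def.mpr ⟨hUsub, fun hsup => ?_⟩
              have : b ∈ Δ.filter (fun y => p a y) :=
                hsup (Finset.mem_filter.mpr ⟨(hp m b hmb).2, hmb⟩)
              exact hab (Finset.mem_filter.mp this).2
            exact absurd (Finset.card_lt_card hss) (not_lt.mpr (hmmin a haM))
        -- restricted relations
        set r : α → α → Prop := fun a b => p a b ∧ a ∈ A ∧ b ∈ A with hr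
        set r' : α → α → Prop := fun a b => p a b ∧ a ∈ B ∧ b ∈ B with hr'
        have lift4 : ∀ (S : Finset α) (q : α → α → Prop),
            (q = fun a b => p a b ∧ a ∈ S ∧ b ∈ S) →
            ∀ x y z t, q x y → q z t →
            (q x t ∧ q z y) ∨ (q x z ∧ q x t) ∨ (q z x ∧ q z y) ∨
            (q t y ∧ q z y) ∨ (q y t ∧ q x t) := by
          rintro S q rfl x y z t ⟨hxy, hxS, hyS⟩ ⟨hzt, hzS, htS⟩
          rcases h4 x y z t hxy hzt with ⟨h1, h2⟩ | ⟨h1, h2⟩ | ⟨h1, h2⟩ | ⟨h1, h2⟩ | ⟨h1, h2⟩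
          · exact Or.inl ⟨⟨h1, hxS, htS⟩, ⟨h2, hzS, hyS⟩⟩
          · exact Or.inr (Or.inl ⟨⟨h1, hxS, hzS⟩, ⟨h2, hxS, htS⟩⟩)
          · exact Or.inr (Or.inr (Or.inl ⟨⟨h1, hzS, hxS⟩, ⟨h2, hzS, hyS⟩⟩))
          · exact Or.inr (Or.inr (Or.inr (Or.inl ⟨⟨h1, htS, hyS⟩, ⟨h2, hzS, hyS⟩⟩)))
          · exact Or.inr (Or.inr (Or.inr (Or.inr ⟨⟨h1, hyS, htS⟩, ⟨h2, hxS, htS⟩⟩)))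
        have hBsub : B ⊆ Δ := Finset.filter_subset _ _
        have hAcard : A.card ≤ n := by
          obtain ⟨b, hb⟩ := hBne
          have : A ⊂ Δ := Finset.ssubset_def.mpr ⟨Finset.sdiff_subset, fun hsup => by
            have := hsup (hBsub hb)
            exact (Finset.mem_sdiff.mp this).2 hb⟩
          have := Finset.card_lt_card this
          omega
        have hBcard : B.card ≤ n := by
          have : B ⊂ Δ := Finset.ssubset_def.mpr ⟨hBsub, fun hsup => by
            have := hsup hmΔ
            exact (Finset.mem_sdiff.mp hmA).2 this⟩
          have := Finset.card_lt_card this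
          omega
        have hQA : QSO A r := by
          apply ih A r hAcard
          · rintro a b ⟨_, ha, hb⟩; exact ⟨ha, hb⟩
          · rintro x ⟨h, _⟩; exact hirr x h
          · exact lift4 A r hr
        have hQB : QSO B r' := by
          apply ih B r' hBcard
          · rintro a b ⟨_, ha, hb⟩; exact ⟨ha, hb⟩
          · rintro x ⟨h, _⟩; exact hirr x h
          · exact lift4 B r' hr'
        have hd : Disjoint A B := Finset.sdiff_disjoint
        have hcomp := QSO.comp hd hQA hQB
        have hAB : A ∪ B = Δ := Finset.sdiff_union_of_subset hBsub
        rw [hAB] at hcomp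
        refine QSO_congr hcomp (fun a b => ?_)
        constructor
        · rintro (⟨h, _⟩ | ⟨h, _⟩ | ⟨ha, hb⟩)
          · exact h
          · exact h
          · exact hcut a ha b hb
        · intro hab
          obtain ⟨haΔ, hbΔ⟩ := hp a b hab
          by_cases haB : a ∈ B
          · by_cases hbB : b ∈ B
            · exact Or.inr (Or.inl ⟨hab, haB, hbB⟩)
            · -- a ∈ B, b ∉ B : impossible by transitivity
              have hma : p m a := (Finset.mem_filter.mp haB).2
              have : p m b := trans a b m hma hab
              exact absurd (Finset.mem_filter.mpr ⟨hbΔ, this⟩) hbB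
          · have haA : a ∈ A := Finset.mem_sdiff.mpr ⟨haΔ, haB⟩
            by_cases hbB : b ∈ B
            · exact Or.inr (Or.inr ⟨haA, hbB⟩)
            · exact Or.inl ⟨hab, haA, Finset.mem_sdiff.mpr ⟨hbΔ, hbB⟩⟩

/-- (Δ,≺,⊏) is a QSM-structure iff (Δ,≺) is a QS-order and
⊏ = {(x,y) ∈ Δ×Δ : ¬ y ≺ x and x ≠ y}. -/
theorem qsm_iff_qso {α : Type*} [DecidableEq α]
    (Δ : Finset α) (p s : α → α → Prop)
    (hp : ∀ a b, p a b → a ∈ Δ ∧ b ∈ Δ)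
    (hs : ∀ a b, s a b → a ∈ Δ ∧ b ∈ Δ) :
    ((∀ x ∈ Δ, ¬ s x x) ∧
     (∀ x ∈ Δ, ∀ y ∈ Δ, (p x y ↔ s x y ∧ ¬ s y x)) ∧
     (∀ x ∈ Δ, ∀ y ∈ Δ, (x ≠ y ↔ p x y ∨ p y x ∨ (s x y ∧ s y x))) ∧
     (∀ x y z t, p x y → p z t →
        (p x t ∧ p z y) ∨ (p x z ∧ p x t) ∨ (p z x ∧ p z y) ∨
        (p t y ∧ p z y) ∨ (p y t ∧ p x t)))
    ↔ (QSO Δ p ∧ ∀ a b, s a b ↔ a ∈ Δ ∧ b ∈ Δ ∧ ¬ p b a ∧ a ≠ b) := by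
  constructor
  · rintro ⟨h1, h2, h3, h4⟩
    have hirr : ∀ x, ¬ p x x := by
      intro x hxx
      obtain ⟨hxΔ, -⟩ := hp x x hxx
      obtain ⟨hsx, hns⟩ := (h2 x hxΔ x hxΔ).mp hxx
      exact hns hsx
    refine ⟨QSO_of_axioms Δ.card Δ p le_rfl hp hirr h4, fun a b => ?_⟩
    constructor
    · intro hab
      obtain ⟨haΔ, hbΔ⟩ := hs a b hab
      have hne : a ≠ b := by rintro rfl; exact h1 a haΔ hab
      refine ⟨haΔ, hbΔ, fun hba => ?_, hne⟩
      · exact ((h2 b hbΔ a haΔ).mp hba).2 hab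
    · rintro ⟨haΔ, hbΔ, hnba, hne⟩
      rcases (h3 a haΔ b hbΔ).mp hne with hab | hba | ⟨hab, -⟩
      · exact ((h2 a haΔ b hbΔ).mp hab).1
      · exact absurd hba hnba
      · exact hab
  · rintro ⟨hq, hsf⟩
    obtain ⟨hconf, hirr, h4⟩ := QSO_axioms hq
    have asym : ∀ a b, p a b → ¬ p b a := by
      intro a b hab hba
      rcases h4 a b b a hab hba with ⟨h, -⟩ | ⟨-, h⟩ | ⟨-, h⟩ | ⟨-, h⟩ | ⟨-, h⟩
      · exact hirr a h
      · exact hirr a h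
      · exact hirr b h
      · exact hirr b h
      · exact hirr a h
    refine ⟨fun x hxΔ hsxx => ?_, fun x hxΔ y hyΔ => ?_, fun x hxΔ y hyΔ => ?_, h4⟩
    · exact ((hsf x x).mp hsxx).2.2.2 rfl
    · constructor
      · intro hxy
        have hne : x ≠ y := by rintro rfl; exact hirr x hxy
        refine ⟨(hsf x y).mpr ⟨hxΔ, hyΔ, asym x y hxy, hne⟩, fun hsyx => ?_⟩
        exact ((hsf y x).mp hsyx).2.2.1 hxy
      · rintro ⟨hsxy, hnsyx⟩
        obtain ⟨-, -, hnyx, hne⟩ := (hsf x y).mp hsxy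
        by_contra hnxy
        exact hnsyx ((hsf y x).mpr ⟨hyΔ, hxΔ, hnxy, hne.symm⟩)
    · constructor
      · intro hne
        by_cases hxy : p x y
        · exact Or.inl hxy
        by_cases hyx : p y x
        · exact Or.inr (Or.inl hyx)
        exact Or.inr (Or.inr ⟨(hsf x y).mpr ⟨hxΔ, hyΔ, hyx, hne⟩,
          (hsf y x).mpr ⟨hyΔ, hxΔ, hxy, hne.symm⟩⟩)
      · rintro (h | h | ⟨h, -⟩)
        · rintro rfl; exact hirr x h
        · rintro rfl; exact hirr x h
        · exact ((hsf x y).mp h).2.2.2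
end

section
/- QSA-structures are projection-closed and intersection-closed: the restriction of a QSA-structure to any subset of its domain is a QSA-structure, and the componentwise intersection of two QSA-structures is a QSA-structure. -/
/-- Φ is a combined strongly connected subset (CSC-subset) of the structure
with relations p (≺) and s (⊏): Φ is nonempty and the graph (Φ, (⊏∪≺)|Φ×Φ)
is strongly connected. -/
def IsCSC {α : Type*} (p s : α → α → Prop) (Φ : Finset α) : Prop :=
  Φ.Nonempty ∧ ∀ a ∈ Φ, ∀ b ∈ Φ,
    Relation.ReflTransGen (fun u v => u ∈ Φ ∧ v ∈ Φ ∧ (p u v ∨ s u v)) a b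

/-- x is a pre-dominant of Φ: x ∈ Φ and x has no ≺-relationship (in either
direction) with elements of Φ. -/
def PreDom {α : Type*} (p : α → α → Prop) (Φ : Finset α) (x : α) : Prop :=
  x ∈ Φ ∧ ∀ y ∈ Φ, ¬ p x y ∧ ¬ p y x

/-- A QSA-structure: a relational structure (both relations irreflexive,
confined to the finite domain Δ) in which every CSC-subset has a pre-dominant. -/
def QSAS {α : Type*} (Δ : Finset α) (p s : α → α → Prop) : Prop :=
  (∀ a b, p a b → a ∈ Δ ∧ b ∈ Δ) ∧ (∀ a b, s a b → a ∈ Δ ∧ b ∈ Δ) ∧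
  (∀ x, ¬ p x x) ∧ (∀ x, ¬ s x x) ∧
  ∀ Φ : Finset α, Φ ⊆ Δ → IsCSC p s Φ → ∃ x, PreDom p Φ x

/-- QSA-structures are projection-closed and intersection-closed. -/
theorem qsas_projection_intersection_closed {α : Type*} [DecidableEq α] :
    (∀ (Δ : Finset α) (p s : α → α → Prop), QSAS Δ p s → ∀ Φ : Finset α, Φ ⊆ Δ →
      QSAS Φ (fun a b => a ∈ Φ ∧ b ∈ Φ ∧ p a b) (fun a b => a ∈ Φ ∧ b ∈ Φ ∧ s a b)) ∧
    (∀ (Δ Δ' : Finset α) (p s p' s' : α → α → Prop),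
      QSAS Δ p s → QSAS Δ' p' s' →
      QSAS (Δ ∩ Δ') (fun a b => p a b ∧ p' a b) (fun a b => s a b ∧ s' a b)) := by
  have csc_mono : ∀ (p s q t : α → α → Prop) (Φ : Finset α),
      (∀ a b, p a b → q a b) → (∀ a b, s a b → t a b) →
      IsCSC p s Φ → IsCSC q t Φ := by
    intro p s q t Φ hp hs ⟨hne, hconn⟩
    refine ⟨hne, fun a ha b hb => ?_⟩
    exact Relation.ReflTransGen.mono (fun u v ⟨hu, hv, h⟩ =>
      ⟨hu, hv, h.imp (hp u v) (hs u v)⟩) _ _ (hconn a ha b hb)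
  constructor
  · intro Δ p s ⟨hpΔ, hsΔ, hpirr, hsirr, hqsa⟩ Φ hΦ
    refine ⟨fun a b h => ⟨h.1, h.2.1⟩, fun a b h => ⟨h.1, h.2.1⟩,
      fun x h => hpirr x h.2.2, fun x h => hsirr x h.2.2, ?_⟩
    intro Ψ hΨ hcsc
    obtain ⟨x, hx, hpd⟩ := hqsa Ψ (hΨ.trans hΦ)
      (csc_mono _ _ p s Ψ (fun a b h => h.2.2) (fun a b h => h.2.2) hcsc)
    exact ⟨x, hx, fun y hy => ⟨fun h => (hpd y hy).1 h.2.2,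
      fun h => (hpd y hy).2 h.2.2⟩⟩
  · intro Δ Δ' p s p' s' ⟨hpΔ, hsΔ, hpirr, hsirr, hqsa⟩ ⟨hpΔ', hsΔ', _, _, _⟩
    refine ⟨fun a b h => ?_, fun a b h => ?_,
      fun x h => hpirr x h.1, fun x h => hsirr x h.1, ?_⟩
    · simp only [Finset.mem_inter]
      exact ⟨⟨(hpΔ a b h.1).1, (hpΔ' a b h.2).1⟩, (hpΔ a b h.1).2, (hpΔ' a b h.2).2⟩
    · simp only [Finset.mem_inter]
      exact ⟨⟨(hsΔ a b h.1).1, (hsΔ' a b h.2).1⟩, (hsΔ a b h.1).2, (hsΔ' a b h.2).2⟩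
    · intro Ψ hΨ hcsc
      obtain ⟨x, hx, hpd⟩ := hqsa Ψ (hΨ.trans Finset.inter_subset_left)
        (csc_mono _ _ p s Ψ (fun a b h => h.1) (fun a b h => h.1) hcsc)
      exact ⟨x, hx, fun y hy => ⟨fun h => (hpd y hy).1 h.1,
        fun h => (hpd y hy).2 h.1⟩⟩
end

section
/- Every QSM-structure is a QSA-structure, and moreover QSM-structures are exactly the maximal QSA-structures: a QSA-structure has no proper extension within the class of QSA-structures if and only if it is a QSM-structure. -/
/-- A QSM-structure (axioms QSMS1–4, relations confined to the domain Δ). -/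
def QSMS {α : Type*} (Δ : Finset α) (p s : α → α → Prop) : Prop :=
  (∀ a b, p a b → a ∈ Δ ∧ b ∈ Δ) ∧ (∀ a b, s a b → a ∈ Δ ∧ b ∈ Δ) ∧
  (∀ x, ¬ s x x) ∧
  (∀ x ∈ Δ, ∀ y ∈ Δ, (p x y ↔ s x y ∧ ¬ s y x)) ∧
  (∀ x ∈ Δ, ∀ y ∈ Δ, (x ≠ y ↔ p x y ∨ p y x ∨ (s x y ∧ s y x))) ∧
  (∀ x y z t, p x y → p z t →
     (p x t ∧ p z y) ∨ (p x z ∧ p x t) ∨ (p z x ∧ p z y) ∨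
     (p t y ∧ p z y) ∨ (p y t ∧ p x t))

section Aux

variable {α : Type*}

/-- Part 1: every QSM-structure is a QSA-structure. -/
lemma qsms_to_qsas {Δ : Finset α} {p s : α → α → Prop} (h : QSMS Δ p s) : QSAS Δ p s := by
  classical
  obtain ⟨hpd, hsd, hsirr, h2, h3, h4⟩ := h
  have hpirr : ∀ x, ¬ p x x := by
    intro x hx
    have hxΔ := (hpd x x hx).1
    have hh := (h2 x hxΔ x hxΔ).1 hx
    exact hh.2 hh.1
  have ptrans : ∀ x y z, p x y → p y z → p x z := by
    intro x y z h1 h2'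
    rcases h4 x y y z h1 h2' with ⟨h,_⟩ | ⟨_,h⟩ | ⟨_,h⟩ | ⟨_,h⟩ | ⟨_,h⟩
    · exact h
    · exact h
    · exact absurd h (hpirr y)
    · exact absurd h (hpirr y)
    · exact h
  have pasym : ∀ x y, p x y → ¬ p y x := by
    intro x y hxy hyx
    have hx := (hpd x y hxy).1
    have hy := (hpd x y hxy).2
    exact ((h2 x hx y hy).1 hxy).2 ((h2 y hy x hx).1 hyx).1
  have schar2 : ∀ x y, x ∈ Δ → y ∈ Δ → s x y → ¬ p y x := by
    intro x y hx hy hsxy hpy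
    exact ((h2 y hy x hx).1 hpy).2 hsxy
  refine ⟨hpd, hsd, hpirr, hsirr, ?_⟩
  intro Φ hΦ hcsc
  obtain ⟨hne, hconn⟩ := hcsc
  by_contra hno
  have hno' : ∀ x ∈ Φ, ∃ y ∈ Φ, p x y ∨ p y x := by
    intro x hx
    by_contra hc
    push_neg at hc
    exact hno ⟨x, hx, fun y hy => hc y hy⟩
  -- existence of maximal elements above any point
  have exists_max : ∀ x ∈ Φ, ∃ m ∈ Φ, (x = m ∨ p x m) ∧ ∀ y ∈ Φ, ¬ p m y := by
    intro x hx
    have hTne : (Φ.filter (fun y => x = y ∨ p x y)).Nonempty :=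
      ⟨x, Finset.mem_filter.mpr ⟨hx, Or.inl rfl⟩⟩
    obtain ⟨m, hmT, hmin⟩ := Finset.exists_min_image
      (Φ.filter (fun y => x = y ∨ p x y))
      (fun y => (Φ.filter (fun u => p y u)).card) hTne
    have hmΦ : m ∈ Φ := (Finset.mem_filter.mp hmT).1
    have hmx : x = m ∨ p x m := (Finset.mem_filter.mp hmT).2
    refine ⟨m, hmΦ, hmx, ?_⟩
    intro y hy hpmy
    have hyT : y ∈ Φ.filter (fun y => x = y ∨ p x y) := by
      refine Finset.mem_filter.mpr ⟨hy, ?_⟩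
      rcases hmx with rfl | hxm
      · exact Or.inr hpmy
      · exact Or.inr (ptrans _ _ _ hxm hpmy)
    have hsub : Φ.filter (fun u => p y u) ⊂ Φ.filter (fun u => p m u) := by
      rw [Finset.ssubset_iff_of_subset]
      · exact ⟨y, Finset.mem_filter.mpr ⟨hy, hpmy⟩,
          fun hc => hpirr y (Finset.mem_filter.mp hc).2⟩
      · intro u hu
        obtain ⟨huΦ, hyu⟩ := Finset.mem_filter.mp hu
        exact Finset.mem_filter.mpr ⟨huΦ, ptrans _ _ _ hpmy hyu⟩
    exact absurd (hmin y hyT) (not_le.mpr (Finset.card_lt_card hsub))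
  -- choose a maximal element m₀ whose predecessor set is card-minimal
  have hMne : (Φ.filter (fun m => ∀ y ∈ Φ, ¬ p m y)).Nonempty := by
    obtain ⟨x, hx⟩ := hne
    obtain ⟨m, hmΦ, _, hmax⟩ := exists_max x hx
    exact ⟨m, Finset.mem_filter.mpr ⟨hmΦ, hmax⟩⟩
  obtain ⟨m₀, hm₀M, hm₀min⟩ := Finset.exists_min_image
    (Φ.filter (fun m => ∀ y ∈ Φ, ¬ p m y))
    (fun m => (Φ.filter (fun z => p z m)).card) hMne
  have hm₀Φ : m₀ ∈ Φ := (Finset.mem_filter.mp hm₀M).1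
  have hm₀max : ∀ y ∈ Φ, ¬ p m₀ y := (Finset.mem_filter.mp hm₀M).2
  have hSne : (Φ.filter (fun z => p z m₀)).Nonempty := by
    obtain ⟨y, hy, hpy⟩ := hno' m₀ hm₀Φ
    rcases hpy with h | h
    · exact absurd h (hm₀max y hy)
    · exact ⟨y, Finset.mem_filter.mpr ⟨hy, h⟩⟩
  -- the cut property: everything below m₀ is below everything not below m₀
  have hcut : ∀ z ∈ Φ.filter (fun z => p z m₀), ∀ v ∈ Φ,
      v ∉ Φ.filter (fun z => p z m₀) → p z v := by
    intro z hzS v hvΦ hvS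
    obtain ⟨hzΦ, hzm₀⟩ := Finset.mem_filter.mp hzS
    have hvm₀ : ¬ p v m₀ := fun h => hvS (Finset.mem_filter.mpr ⟨hvΦ, h⟩)
    by_cases hvmax : ∀ y ∈ Φ, ¬ p v y
    · -- v is maximal
      by_contra hzv
      have hsub : Φ.filter (fun w => p w v) ⊂ Φ.filter (fun w => p w m₀) := by
        rw [Finset.ssubset_iff_of_subset]
        · exact ⟨z, Finset.mem_filter.mpr ⟨hzΦ, hzm₀⟩,
            fun hc => hzv (Finset.mem_filter.mp hc).2⟩
        · intro w hw
          obtain ⟨hwΦ, hwv⟩ := Finset.mem_filter.mp hw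
          rcases h4 z m₀ w v hzm₀ hwv with ⟨h,_⟩ | ⟨_,h⟩ | ⟨_,h⟩ | ⟨h,_⟩ | ⟨h,_⟩
          · exact absurd h hzv
          · exact absurd h hzv
          · exact Finset.mem_filter.mpr ⟨hwΦ, h⟩
          · exact absurd h hvm₀
          · exact absurd h (hm₀max v hvΦ)
      have hvM : v ∈ Φ.filter (fun m => ∀ y ∈ Φ, ¬ p m y) :=
        Finset.mem_filter.mpr ⟨hvΦ, hvmax⟩
      exact absurd (hm₀min v hvM) (not_le.mpr (Finset.card_lt_card hsub))
    · -- v is not maximal: it has a maximal element above it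
      push_neg at hvmax
      obtain ⟨y₀, hy₀Φ, hvy₀⟩ := hvmax
      obtain ⟨m, hmΦ, hvm, hmmax⟩ := exists_max y₀ hy₀Φ
      have hvy : p v m := by
        rcases hvm with rfl | h
        · exact hvy₀
        · exact ptrans _ _ _ hvy₀ h
      rcases h4 v m z m₀ hvy hzm₀ with ⟨h,_⟩ | ⟨_,h⟩ | ⟨h,_⟩ | ⟨h,_⟩ | ⟨h,_⟩
      · exact absurd h hvm₀
      · exact absurd h hvm₀
      · exact h
      · exact absurd h (hm₀max m hmΦ)
      · exact absurd h (hmmax m₀ hm₀Φ)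
  -- contradiction with strong connectivity
  obtain ⟨z₀, hz₀S⟩ := hSne
  have hz₀Φ : z₀ ∈ Φ := (Finset.mem_filter.mp hz₀S).1
  have hm₀S : m₀ ∉ Φ.filter (fun z => p z m₀) :=
    fun h => hpirr m₀ (Finset.mem_filter.mp h).2
  have hstay : ∀ c, Relation.ReflTransGen
      (fun u v => u ∈ Φ ∧ v ∈ Φ ∧ (p u v ∨ s u v)) m₀ c →
      c ∉ Φ.filter (fun z => p z m₀) := by
    intro c hc
    induction hc with
    | refl => exact hm₀S
    | @tail b c' hab hbc ih =>
      obtain ⟨hbΦ, hc'Φ, hrel⟩ := hbc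
      intro hc'S
      have hpcb : p c' b := hcut c' hc'S b hbΦ ih
      rcases hrel with h | h
      · exact pasym _ _ h hpcb
      · exact schar2 b c' (hΦ hbΦ) (hΦ hc'Φ) h hpcb
  exact hstay z₀ (hconn m₀ hm₀Φ z₀ hz₀Φ) hz₀S

/-- A two-element set with arrows both ways is a CSC-subset. -/
lemma pair_csc [DecidableEq α] {p s : α → α → Prop} {x y : α}
    (h1 : p x y ∨ s x y) (h2 : p y x ∨ s y x) : IsCSC p s ({x, y} : Finset α) := by
  have hx : x ∈ ({x, y} : Finset α) := Finset.mem_insert_self x {y}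
  have hy : y ∈ ({x, y} : Finset α) := by simp
  refine ⟨⟨x, hx⟩, ?_⟩
  have e1 : Relation.ReflTransGen
      (fun u v => u ∈ ({x, y} : Finset α) ∧ v ∈ ({x, y} : Finset α) ∧ (p u v ∨ s u v)) x y :=
    Relation.ReflTransGen.single ⟨hx, hy, h1⟩
  have e2 : Relation.ReflTransGen
      (fun u v => u ∈ ({x, y} : Finset α) ∧ v ∈ ({x, y} : Finset α) ∧ (p u v ∨ s u v)) y x :=
    Relation.ReflTransGen.single ⟨hy, hx, h2⟩
  intro a ha b hb
  rcases Finset.mem_insert.mp ha with rfl | ha'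
  · rcases Finset.mem_insert.mp hb with rfl | hb'
    · exact Relation.ReflTransGen.refl
    · obtain rfl := Finset.mem_singleton.mp hb'
      exact e1
  · obtain rfl := Finset.mem_singleton.mp ha'
    rcases Finset.mem_insert.mp hb with rfl | hb'
    · exact e2
    · obtain rfl := Finset.mem_singleton.mp hb'
      exact Relation.ReflTransGen.refl

/-- Part 2b: a QSM-structure admits no proper QSAS extension. -/
lemma qsms_max {Δ : Finset α} {p s p' s' : α → α → Prop}
    (hq : QSMS Δ p s) (hp : ∀ a b, p a b → p' a b) (hs : ∀ a b, s a b → s' a b)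
    (hq' : QSAS Δ p' s') : p' = p ∧ s' = s := by
  classical
  obtain ⟨hpd, hsd, hsirr, h2, h3, h4⟩ := hq
  obtain ⟨hpd', hsd', hpirr', hsirr', hmain'⟩ := hq'
  have hps : ∀ a b, p a b → s a b :=
    fun a b h => ((h2 a (hpd a b h).1 b (hpd a b h).2).1 h).1
  have hpair : ∀ x y : α, x ∈ Δ → y ∈ Δ → ({x, y} : Finset α) ⊆ Δ := by
    intro x y hxΔ hyΔ z hz
    rcases Finset.mem_insert.mp hz with rfl | hz'
    · exact hxΔ
    · rwa [Finset.mem_singleton.mp hz']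
  have hs'eq : s' = s := by
    funext x y
    apply propext
    constructor
    · intro hxy
      by_contra hsxy
      have hxΔ : x ∈ Δ := (hsd' x y hxy).1
      have hyΔ : y ∈ Δ := (hsd' x y hxy).2
      have hne : x ≠ y := fun h => hsirr' x (h ▸ hxy)
      have hpyx : p y x := by
        rcases (h3 x hxΔ y hyΔ).1 hne with h | h | ⟨h1, _⟩
        · exact absurd (hps x y h) hsxy
        · exact h
        · exact absurd h1 hsxy
      obtain ⟨d, hdm, hdp⟩ := hmain' {x, y} (hpair x y hxΔ hyΔ)
        (pair_csc (Or.inr hxy) (Or.inl (hp y x hpyx)))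
      rcases Finset.mem_insert.mp hdm with rfl | hd'
      · exact (hdp y (by simp)).2 (hp _ _ hpyx)
      · obtain rfl := Finset.mem_singleton.mp hd'
        exact (hdp x (by simp)).1 (hp _ _ hpyx)
    · exact hs x y
  have hp'eq : p' = p := by
    funext x y
    apply propext
    constructor
    · intro hxy
      by_contra hpxy
      have hxΔ : x ∈ Δ := (hpd' x y hxy).1
      have hyΔ : y ∈ Δ := (hpd' x y hxy).2
      have hne : x ≠ y := fun h => hpirr' x (h ▸ hxy)
      rcases (h3 x hxΔ y hyΔ).1 hne with h | h | ⟨h1, h2'⟩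
      · exact hpxy h
      · obtain ⟨d, hdm, hdp⟩ := hmain' {x, y} (hpair x y hxΔ hyΔ)
          (pair_csc (Or.inl hxy) (Or.inl (hp y x h)))
        rcases Finset.mem_insert.mp hdm with rfl | hd'
        · exact (hdp y (by simp)).1 hxy
        · obtain rfl := Finset.mem_singleton.mp hd'
          exact (hdp x (by simp)).2 hxy
      · obtain ⟨d, hdm, hdp⟩ := hmain' {x, y} (hpair x y hxΔ hyΔ)
          (pair_csc (Or.inr (hs _ _ h1)) (Or.inr (hs _ _ h2')))
        rcases Finset.mem_insert.mp hdm with rfl | hd'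
        · exact (hdp y (by simp)).1 hxy
        · obtain rfl := Finset.mem_singleton.mp hd'
          exact (hdp x (by simp)).2 hxy
    · exact hp x y
  exact ⟨hp'eq, hs'eq⟩

/-- Restricting a QSA-structure to a subset of the domain gives a QSA-structure. -/
lemma qsas_restrict {Δ : Finset α} {p s : α → α → Prop} (h : QSAS Δ p s)
    {U : Finset α} (hU : U ⊆ Δ) :
    QSAS U (fun x y => p x y ∧ x ∈ U ∧ y ∈ U) (fun x y => s x y ∧ x ∈ U ∧ y ∈ U) := by
  obtain ⟨hpd, hsd, hpirr, hsirr, hmain⟩ := h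
  refine ⟨fun a b hab => ⟨hab.2.1, hab.2.2⟩, fun a b hab => ⟨hab.2.1, hab.2.2⟩,
    fun x hx => hpirr x hx.1, fun x hx => hsirr x hx.1, ?_⟩
  intro Φ hΦ hcsc
  obtain ⟨hne, hconn⟩ := hcsc
  obtain ⟨x, hx, hxd⟩ := hmain Φ (hΦ.trans hU) ⟨hne, fun a ha b hb =>
    Relation.ReflTransGen.mono (p := fun u v => u ∈ Φ ∧ v ∈ Φ ∧ (p u v ∨ s u v))
      (fun u v huv => ⟨huv.1, huv.2.1,
        huv.2.2.elim (fun hh => Or.inl hh.1) (fun hh => Or.inr hh.1)⟩)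
      a b (hconn a ha b hb)⟩
  exact ⟨x, hx, fun y hy => ⟨fun hc => (hxd y hy).1 hc.1, fun hc => (hxd y hy).2 hc.1⟩⟩

/-- Empty-domain QSA-structures are QSM-structures. -/
lemma qsms_of_not_nonempty {Δ : Finset α} {p s : α → α → Prop}
    (h : ¬ Δ.Nonempty) (hq : QSAS Δ p s) : QSMS Δ p s := by
  obtain ⟨hpd, hsd, _, hsirr, -⟩ := hq
  have hmem : ∀ x : α, x ∉ Δ := fun x hx => h ⟨x, hx⟩
  exact ⟨hpd, hsd, hsirr,
    fun x hx => absurd hx (hmem x),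
    fun x hx => absurd hx (hmem x),
    fun x y z t hxy _ => absurd (hpd x y hxy).1 (hmem x)⟩

/-- Completion theorem: every QSA-structure extends to a QSM-structure. -/
lemma qsas_completion {α : Type*} : ∀ (n : ℕ) (Δ : Finset α) (p s : α → α → Prop),
    Δ.card ≤ n → QSAS Δ p s →
    ∃ p' s', (∀ a b, p a b → p' a b) ∧ (∀ a b, s a b → s' a b) ∧ QSMS Δ p' s' := by
  intro n
  induction n with
  | zero =>
    intro Δ p s hcard hq
    have hΔ : ¬ Δ.Nonempty := by
      rw [Finset.card_eq_zero.mp (Nat.le_zero.mp hcard)]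
      exact Finset.not_nonempty_empty
    exact ⟨p, s, fun _ _ h => h, fun _ _ h => h, qsms_of_not_nonempty hΔ hq⟩
  | succ n ih =>
    intro Δ p s hcard hq
    classical
    by_cases hcsc : IsCSC p s Δ
    · -- hub case: Δ itself is CSC, remove a pre-dominant element
      obtain ⟨d, hdΔ, hdp⟩ := hq.2.2.2.2 Δ (Finset.Subset.refl Δ) hcsc
      have hUsub : Δ.erase d ⊆ Δ := Finset.erase_subset d Δ
      have hUcard : (Δ.erase d).card ≤ n := by
        have h1 : (Δ.erase d).card = Δ.card - 1 := Finset.card_erase_of_mem hdΔ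
        omega
      obtain ⟨p₁, s₁, hp₁, hs₁, hqsm₁⟩ := ih (Δ.erase d) _ _ hUcard (qsas_restrict hq hUsub)
      obtain ⟨hpd₁, hsd₁, hsirr₁, h2₁, h3₁, h4₁⟩ := hqsm₁
      have hdU : d ∉ Δ.erase d := Finset.notMem_erase d Δ
      have hmemU : ∀ x ∈ Δ, x ≠ d → x ∈ Δ.erase d :=
        fun x hx hne => Finset.mem_erase.mpr ⟨hne, hx⟩
      have hp₁irr : ∀ x, ¬ p₁ x x := by
        intro x h
        have hxU := (hpd₁ x x h).1
        have hh := (h2₁ x hxU x hxU).1 h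
        exact hh.2 hh.1
      refine ⟨p₁, fun x y => s₁ x y ∨ (x = d ∧ y ∈ Δ.erase d) ∨ (x ∈ Δ.erase d ∧ y = d),
        ?_, ?_, ?_, ?_, ?_, ?_, ?_, ?_⟩
      · -- p ⊆ p₁
        intro a b hab
        have haΔ := (hq.1 a b hab).1
        have hbΔ := (hq.1 a b hab).2
        have had : a ≠ d := fun h => (hdp b hbΔ).1 (h ▸ hab)
        have hbd : b ≠ d := fun h => (hdp a haΔ).2 (h ▸ hab)
        exact hp₁ a b ⟨hab, hmemU a haΔ had, hmemU b hbΔ hbd⟩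
      · -- s ⊆ s'
        intro a b hab
        have haΔ := (hq.2.1 a b hab).1
        have hbΔ := (hq.2.1 a b hab).2
        by_cases had : a = d
        · refine Or.inr (Or.inl ⟨had, hmemU b hbΔ ?_⟩)
          intro hbd
          rw [had, hbd] at hab
          exact hq.2.2.2.1 d hab
        · by_cases hbd : b = d
          · exact Or.inr (Or.inr ⟨hmemU a haΔ had, hbd⟩)
          · exact Or.inl (hs₁ a b ⟨hab, hmemU a haΔ had, hmemU b hbΔ hbd⟩)
      · -- p₁ domain
        exact fun a b hab => ⟨hUsub (hpd₁ a b hab).1, hUsub (hpd₁ a b hab).2⟩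
      · -- s' domain
        intro a b hab
        rcases hab with h | ⟨rfl, hb⟩ | ⟨ha, rfl⟩
        · exact ⟨hUsub (hsd₁ a b h).1, hUsub (hsd₁ a b h).2⟩
        · exact ⟨hdΔ, hUsub hb⟩
        · exact ⟨hUsub ha, hdΔ⟩
      · -- s' irreflexive
        intro x hx
        rcases hx with h | ⟨rfl, hxU⟩ | ⟨hxU, rfl⟩
        · exact hsirr₁ x h
        · exact hdU hxU
        · exact hdU hxU
      · -- QSMS2
        intro x hxΔ y hyΔ
        by_cases hxd : x = d
        · constructor
          · intro hpxy
            have hxU := (hpd₁ x y hpxy).1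
            rw [hxd] at hxU
            exact absurd hxU hdU
          · rintro ⟨hsxy, hnsyx⟩
            exfalso
            by_cases hyd : y = d
            · rcases hsxy with h | ⟨-, hyU⟩ | ⟨hxU, -⟩
              · have hxU := (hsd₁ x y h).1
                rw [hxd] at hxU
                exact hdU hxU
              · rw [hyd] at hyU
                exact hdU hyU
              · rw [hxd] at hxU
                exact hdU hxU
            · exact hnsyx (Or.inr (Or.inr ⟨hmemU y hyΔ hyd, hxd⟩))
        · by_cases hyd : y = d
          · constructor
            · intro hpxy
              have hyU := (hpd₁ x y hpxy).2
              rw [hyd] at hyU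
              exact absurd hyU hdU
            · rintro ⟨hsxy, hnsyx⟩
              exact absurd (Or.inr (Or.inl ⟨hyd, hmemU x hxΔ hxd⟩)) hnsyx
          · have hxU := hmemU x hxΔ hxd
            have hyU := hmemU y hyΔ hyd
            constructor
            · intro hpxy
              obtain ⟨ha, hb⟩ := (h2₁ x hxU y hyU).1 hpxy
              refine ⟨Or.inl ha, ?_⟩
              rintro (h | ⟨rfl, -⟩ | ⟨-, rfl⟩)
              · exact hb h
              · exact hdU hyU
              · exact hdU hxU
            · rintro ⟨hsxy, hnsyx⟩
              have hsxy' : s₁ x y := by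
                rcases hsxy with h | ⟨rfl, -⟩ | ⟨-, rfl⟩
                · exact h
                · exact absurd hxU hdU
                · exact absurd hyU hdU
              exact (h2₁ x hxU y hyU).2 ⟨hsxy', fun hc => hnsyx (Or.inl hc)⟩
      · -- QSMS3
        intro x hxΔ y hyΔ
        constructor
        · intro hne
          by_cases hxd : x = d
          · have hyU : y ∈ Δ.erase d := hmemU y hyΔ (fun h => hne (by rw [hxd, h]))
            exact Or.inr (Or.inr ⟨Or.inr (Or.inl ⟨hxd, hyU⟩), Or.inr (Or.inr ⟨hyU, hxd⟩)⟩)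
          · by_cases hyd : y = d
            · have hxU := hmemU x hxΔ hxd
              exact Or.inr (Or.inr ⟨Or.inr (Or.inr ⟨hxU, hyd⟩), Or.inr (Or.inl ⟨hyd, hxU⟩)⟩)
            · have hxU := hmemU x hxΔ hxd
              have hyU := hmemU y hyΔ hyd
              rcases (h3₁ x hxU y hyU).1 hne with h | h | ⟨ha, hb⟩
              · exact Or.inl h
              · exact Or.inr (Or.inl h)
              · exact Or.inr (Or.inr ⟨Or.inl ha, Or.inl hb⟩)
        · intro hcase
          rintro rfl
          rcases hcase with h | h | ⟨h1, -⟩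
          · exact hp₁irr x h
          · exact hp₁irr x h
          · rcases h1 with h | ⟨rfl, hxU⟩ | ⟨hxU, rfl⟩
            · exact hsirr₁ x h
            · exact hdU hxU
            · exact hdU hxU
      · -- QSMS4
        exact fun x y z t hxy hzt => h4₁ x y z t hxy hzt
    · by_cases hneΔ : Δ.Nonempty
      · -- split case: Δ nonempty but not CSC
        have hconn' : ¬ ∀ a ∈ Δ, ∀ b ∈ Δ, Relation.ReflTransGen
            (fun u v => u ∈ Δ ∧ v ∈ Δ ∧ (p u v ∨ s u v)) a b :=
          fun hc => hcsc ⟨hneΔ, hc⟩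
        push_neg at hconn'
        obtain ⟨a, haΔ, b, hbΔ, hab⟩ := hconn'
        set U := Δ.filter (fun x => Relation.ReflTransGen
          (fun u v => u ∈ Δ ∧ v ∈ Δ ∧ (p u v ∨ s u v)) x b) with hUdef
        have hUsub : U ⊆ Δ := Finset.filter_subset _ _
        have hVsub : Δ \ U ⊆ Δ := Finset.sdiff_subset
        have hbU : b ∈ U := Finset.mem_filter.mpr ⟨hbΔ, Relation.ReflTransGen.refl⟩
        have haU : a ∉ U := fun h => hab (Finset.mem_filter.mp h).2
        have haV : a ∈ Δ \ U := Finset.mem_sdiff.mpr ⟨haΔ, haU⟩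
        have hbV : b ∉ Δ \ U := fun h => (Finset.mem_sdiff.mp h).2 hbU
        have hnoedge : ∀ u v, (p u v ∨ s u v) → v ∈ U → u ∈ Δ → u ∈ U := by
          intro u v hrel hvU huΔ
          obtain ⟨hvΔ, hreach⟩ := Finset.mem_filter.mp hvU
          exact Finset.mem_filter.mpr
            ⟨huΔ, Relation.ReflTransGen.head ⟨huΔ, hvΔ, hrel⟩ hreach⟩
        have hUcard : U.card ≤ n := by
          have h1 : U.card < Δ.card :=
            Finset.card_lt_card ((Finset.ssubset_iff_of_subset hUsub).mpr ⟨a, haΔ, haU⟩)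
          omega
        have hVcard : (Δ \ U).card ≤ n := by
          have h1 : (Δ \ U).card < Δ.card :=
            Finset.card_lt_card ((Finset.ssubset_iff_of_subset hVsub).mpr ⟨b, hbΔ, hbV⟩)
          omega
        obtain ⟨p₁, s₁, hp₁, hs₁, hq₁⟩ := ih U _ _ hUcard (qsas_restrict hq hUsub)
        obtain ⟨p₂, s₂, hp₂, hs₂, hq₂⟩ := ih (Δ \ U) _ _ hVcard (qsas_restrict hq hVsub)
        obtain ⟨hpd₁, hsd₁, hsirr₁, h2₁, h3₁, h4₁⟩ := hq₁
        obtain ⟨hpd₂, hsd₂, hsirr₂, h2₂, h3₂, h4₂⟩ := hq₂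
        have hdisj : ∀ x, x ∈ U → x ∈ Δ \ U → False :=
          fun x hU hV => (Finset.mem_sdiff.mp hV).2 hU
        have hcover : ∀ x ∈ Δ, x ∈ U ∨ x ∈ Δ \ U := by
          intro x hx
          by_cases h : x ∈ U
          · exact Or.inl h
          · exact Or.inr (Finset.mem_sdiff.mpr ⟨hx, h⟩)
        have hp₁irr : ∀ x, ¬ p₁ x x := by
          intro x h
          have hxU := (hpd₁ x x h).1
          have hh := (h2₁ x hxU x hxU).1 h
          exact hh.2 hh.1
        have hp₂irr : ∀ x, ¬ p₂ x x := by
          intro x h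
          have hxV := (hpd₂ x x h).1
          have hh := (h2₂ x hxV x hxV).1 h
          exact hh.2 hh.1
        have hPcase : ∀ x y, (p₁ x y ∨ p₂ x y ∨ (x ∈ U ∧ y ∈ Δ \ U)) →
            (p₁ x y ∧ x ∈ U ∧ y ∈ U) ∨ (p₂ x y ∧ x ∈ Δ \ U ∧ y ∈ Δ \ U) ∨
            (x ∈ U ∧ y ∈ Δ \ U) := by
          intro x y h
          rcases h with h | h | h
          · exact Or.inl ⟨h, hpd₁ x y h⟩
          · exact Or.inr (Or.inl ⟨h, hpd₂ x y h⟩)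
          · exact Or.inr (Or.inr h)
        have hSnot : ∀ x y, x ∈ Δ \ U → y ∈ U →
            ¬ (s₁ x y ∨ s₂ x y ∨ (x ∈ U ∧ y ∈ Δ \ U)) := by
          intro x y hxV hyU h
          rcases h with h | h | ⟨hxU, -⟩
          · exact hdisj x (hsd₁ x y h).1 hxV
          · exact hdisj y hyU (hsd₂ x y h).2
          · exact hdisj x hxU hxV
        have hPnot : ∀ x y, x ∈ Δ \ U → y ∈ U →
            ¬ (p₁ x y ∨ p₂ x y ∨ (x ∈ U ∧ y ∈ Δ \ U)) := by
          intro x y hxV hyU h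
          rcases h with h | h | ⟨hxU, -⟩
          · exact hdisj x (hpd₁ x y h).1 hxV
          · exact hdisj y hyU (hpd₂ x y h).2
          · exact hdisj x hxU hxV
        refine ⟨fun x y => p₁ x y ∨ p₂ x y ∨ (x ∈ U ∧ y ∈ Δ \ U),
          fun x y => s₁ x y ∨ s₂ x y ∨ (x ∈ U ∧ y ∈ Δ \ U),
          ?_, ?_, ?_, ?_, ?_, ?_, ?_, ?_⟩
        · -- p ⊆ P
          intro x y hxy
          have hx := (hq.1 x y hxy).1
          have hy := (hq.1 x y hxy).2
          rcases hcover x hx with hxU | hxV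
          · rcases hcover y hy with hyU | hyV
            · exact Or.inl (hp₁ x y ⟨hxy, hxU, hyU⟩)
            · exact Or.inr (Or.inr ⟨hxU, hyV⟩)
          · rcases hcover y hy with hyU | hyV
            · exact absurd (hnoedge x y (Or.inl hxy) hyU hx) (Finset.mem_sdiff.mp hxV).2
            · exact Or.inr (Or.inl (hp₂ x y ⟨hxy, hxV, hyV⟩))
        · -- s ⊆ S
          intro x y hxy
          have hx := (hq.2.1 x y hxy).1
          have hy := (hq.2.1 x y hxy).2
          rcases hcover x hx with hxU | hxV
          · rcases hcover y hy with hyU | hyV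
            · exact Or.inl (hs₁ x y ⟨hxy, hxU, hyU⟩)
            · exact Or.inr (Or.inr ⟨hxU, hyV⟩)
          · rcases hcover y hy with hyU | hyV
            · exact absurd (hnoedge x y (Or.inr hxy) hyU hx) (Finset.mem_sdiff.mp hxV).2
            · exact Or.inr (Or.inl (hs₂ x y ⟨hxy, hxV, hyV⟩))
        · -- P domain
          intro x y hxy
          rcases hPcase x y hxy with ⟨-, ha, hb⟩ | ⟨-, ha, hb⟩ | ⟨ha, hb⟩
          · exact ⟨hUsub ha, hUsub hb⟩
          · exact ⟨hVsub ha, hVsub hb⟩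
          · exact ⟨hUsub ha, hVsub hb⟩
        · -- S domain
          intro x y hxy
          rcases hxy with h | h | ⟨ha, hb⟩
          · exact ⟨hUsub (hsd₁ x y h).1, hUsub (hsd₁ x y h).2⟩
          · exact ⟨hVsub (hsd₂ x y h).1, hVsub (hsd₂ x y h).2⟩
          · exact ⟨hUsub ha, hVsub hb⟩
        · -- S irreflexive
          intro x hx
          rcases hx with h | h | ⟨ha, hb⟩
          · exact hsirr₁ x h
          · exact hsirr₂ x h
          · exact hdisj x ha hb
        · -- QSMS2
          intro x hxΔ y hyΔ
          rcases hcover x hxΔ with hxU | hxV <;> rcases hcover y hyΔ with hyU | hyV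
          · constructor
            · intro h
              have hp1 : p₁ x y := by
                rcases h with h | h | ⟨-, hyV⟩
                · exact h
                · exact absurd (hpd₂ x y h).1 (fun hv => hdisj x hxU hv)
                · exact absurd hyV (fun hv => hdisj y hyU hv)
              obtain ⟨ha, hb⟩ := (h2₁ x hxU y hyU).1 hp1
              refine ⟨Or.inl ha, ?_⟩
              rintro (h' | h' | ⟨hyU', hxV'⟩)
              · exact hb h'
              · exact hdisj y hyU (hsd₂ y x h').1
              · exact hdisj x hxU hxV'
            · rintro ⟨h1, h2'⟩
              have hs1 : s₁ x y := by
                rcases h1 with h | h | ⟨-, hyV⟩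
                · exact h
                · exact absurd (hsd₂ x y h).1 (fun hv => hdisj x hxU hv)
                · exact absurd hyV (fun hv => hdisj y hyU hv)
              exact Or.inl ((h2₁ x hxU y hyU).2 ⟨hs1, fun hc => h2' (Or.inl hc)⟩)
          · constructor
            · intro _
              exact ⟨Or.inr (Or.inr ⟨hxU, hyV⟩), hSnot y x hyV hxU⟩
            · intro _
              exact Or.inr (Or.inr ⟨hxU, hyV⟩)
          · constructor
            · intro h
              exact absurd h (hPnot x y hxV hyU)
            · rintro ⟨h1, -⟩
              exact absurd h1 (hSnot x y hxV hyU)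
          · constructor
            · intro h
              have hp2 : p₂ x y := by
                rcases h with h | h | ⟨hxU, -⟩
                · exact absurd (hpd₁ x y h).1 (fun hu => hdisj x hu hxV)
                · exact h
                · exact absurd hxU (fun hu => hdisj x hu hxV)
              obtain ⟨ha, hb⟩ := (h2₂ x hxV y hyV).1 hp2
              refine ⟨Or.inr (Or.inl ha), ?_⟩
              rintro (h' | h' | ⟨hyU', -⟩)
              · exact hdisj y (hsd₁ y x h').1 hyV
              · exact hb h'
              · exact hdisj y hyU' hyV
            · rintro ⟨h1, h2'⟩
              have hs2 : s₂ x y := by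
                rcases h1 with h | h | ⟨hxU, -⟩
                · exact absurd (hsd₁ x y h).1 (fun hu => hdisj x hu hxV)
                · exact h
                · exact absurd hxU (fun hu => hdisj x hu hxV)
              exact Or.inr (Or.inl ((h2₂ x hxV y hyV).2
                ⟨hs2, fun hc => h2' (Or.inr (Or.inl hc))⟩))
        · -- QSMS3
          intro x hxΔ y hyΔ
          constructor
          · intro hne
            rcases hcover x hxΔ with hxU | hxV <;> rcases hcover y hyΔ with hyU | hyV
            · rcases (h3₁ x hxU y hyU).1 hne with h | h | ⟨ha, hb⟩
              · exact Or.inl (Or.inl h)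
              · exact Or.inr (Or.inl (Or.inl h))
              · exact Or.inr (Or.inr ⟨Or.inl ha, Or.inl hb⟩)
            · exact Or.inl (Or.inr (Or.inr ⟨hxU, hyV⟩))
            · exact Or.inr (Or.inl (Or.inr (Or.inr ⟨hyU, hxV⟩)))
            · rcases (h3₂ x hxV y hyV).1 hne with h | h | ⟨ha, hb⟩
              · exact Or.inl (Or.inr (Or.inl h))
              · exact Or.inr (Or.inl (Or.inr (Or.inl h)))
              · exact Or.inr (Or.inr ⟨Or.inr (Or.inl ha), Or.inr (Or.inl hb)⟩)
          · intro hcase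
            rintro rfl
            rcases hcase with h | h | ⟨h1, -⟩
            · rcases h with h' | h' | ⟨ha, hb⟩
              · exact hp₁irr x h'
              · exact hp₂irr x h'
              · exact hdisj x ha hb
            · rcases h with h' | h' | ⟨ha, hb⟩
              · exact hp₁irr x h'
              · exact hp₂irr x h'
              · exact hdisj x ha hb
            · rcases h1 with h' | h' | ⟨ha, hb⟩
              · exact hsirr₁ x h'
              · exact hsirr₂ x h'
              · exact hdisj x ha hb
        · -- QSMS4
          intro x y z t hxy hzt
          rcases hPcase x y hxy with ⟨hpa, hxU, hyU⟩ | ⟨hpa, hxV, hyV⟩ | ⟨hxU, hyV⟩ <;>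
            rcases hPcase z t hzt with ⟨hpb, hzU, htU⟩ | ⟨hpb, hzV, htV⟩ | ⟨hzU, htV⟩
          · -- UU, UU
            rcases h4₁ x y z t hpa hpb with ⟨a1,a2⟩|⟨a1,a2⟩|⟨a1,a2⟩|⟨a1,a2⟩|⟨a1,a2⟩
            · exact Or.inl ⟨Or.inl a1, Or.inl a2⟩
            · exact Or.inr (Or.inl ⟨Or.inl a1, Or.inl a2⟩)
            · exact Or.inr (Or.inr (Or.inl ⟨Or.inl a1, Or.inl a2⟩))
            · exact Or.inr (Or.inr (Or.inr (Or.inl ⟨Or.inl a1, Or.inl a2⟩)))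
            · exact Or.inr (Or.inr (Or.inr (Or.inr ⟨Or.inl a1, Or.inl a2⟩)))
          · -- UU, VV : disjunct 2
            exact Or.inr (Or.inl ⟨Or.inr (Or.inr ⟨hxU, hzV⟩), Or.inr (Or.inr ⟨hxU, htV⟩)⟩)
          · -- UU, cross : disjunct 5
            exact Or.inr (Or.inr (Or.inr (Or.inr
              ⟨Or.inr (Or.inr ⟨hyU, htV⟩), Or.inr (Or.inr ⟨hxU, htV⟩)⟩)))
          · -- VV, UU : disjunct 3
            exact Or.inr (Or.inr (Or.inl
              ⟨Or.inr (Or.inr ⟨hzU, hxV⟩), Or.inr (Or.inr ⟨hzU, hyV⟩)⟩))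
          · -- VV, VV
            rcases h4₂ x y z t hpa hpb with ⟨a1,a2⟩|⟨a1,a2⟩|⟨a1,a2⟩|⟨a1,a2⟩|⟨a1,a2⟩
            · exact Or.inl ⟨Or.inr (Or.inl a1), Or.inr (Or.inl a2)⟩
            · exact Or.inr (Or.inl ⟨Or.inr (Or.inl a1), Or.inr (Or.inl a2)⟩)
            · exact Or.inr (Or.inr (Or.inl ⟨Or.inr (Or.inl a1), Or.inr (Or.inl a2)⟩))
            · exact Or.inr (Or.inr (Or.inr (Or.inl ⟨Or.inr (Or.inl a1), Or.inr (Or.inl a2)⟩)))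
            · exact Or.inr (Or.inr (Or.inr (Or.inr ⟨Or.inr (Or.inl a1), Or.inr (Or.inl a2)⟩)))
          · -- VV, cross : disjunct 3
            exact Or.inr (Or.inr (Or.inl
              ⟨Or.inr (Or.inr ⟨hzU, hxV⟩), Or.inr (Or.inr ⟨hzU, hyV⟩)⟩))
          · -- cross, UU : disjunct 4
            exact Or.inr (Or.inr (Or.inr (Or.inl
              ⟨Or.inr (Or.inr ⟨htU, hyV⟩), Or.inr (Or.inr ⟨hzU, hyV⟩)⟩)))
          · -- cross, VV : disjunct 2
            exact Or.inr (Or.inl ⟨Or.inr (Or.inr ⟨hxU, hzV⟩), Or.inr (Or.inr ⟨hxU, htV⟩)⟩)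
          · -- cross, cross : disjunct 1
            exact Or.inl ⟨Or.inr (Or.inr ⟨hxU, htV⟩), Or.inr (Or.inr ⟨hzU, hyV⟩)⟩
      · -- Δ empty
        exact ⟨p, s, fun _ _ h => h, fun _ _ h => h, qsms_of_not_nonempty hneΔ hq⟩

end Aux

/-- Every QSM-structure is a QSA-structure, and the QSM-structures
are exactly the maximal QSA-structures. -/
theorem qsms_eq_maximal_qsas {α : Type*} :
    (∀ (Δ : Finset α) (p s : α → α → Prop), QSMS Δ p s → QSAS Δ p s) ∧
    (∀ (Δ : Finset α) (p s : α → α → Prop), QSAS Δ p s →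
      ((∀ p' s' : α → α → Prop,
          (∀ a b, p a b → p' a b) → (∀ a b, s a b → s' a b) →
          QSAS Δ p' s' → p' = p ∧ s' = s)
        ↔ QSMS Δ p s)) := by
  constructor
  · exact fun Δ p s h => qsms_to_qsas h
  · intro Δ p s hq
    constructor
    · intro hmax
      obtain ⟨p', s', hp, hs, hqsm⟩ := qsas_completion Δ.card Δ p s le_rfl hq
      obtain ⟨hp', hs'⟩ := hmax p' s' hp hs (qsms_to_qsas hqsm)
      rw [← hp', ← hs']
      exact hqsm
    · intro hqsm p' s' hp hs hq'
      exact qsms_max hqsm hp hs hq'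
end

section
/- Every QSA-structure has at least one extension (same domain, larger or equal relations) that is a QSM-structure. -/
/-- Every QSA-structure has an extension that is a QSM-structure. -/
theorem qsas_has_qsms_extension {α : Type*}
    (Δ : Finset α) (p s : α → α → Prop) (h : QSAS Δ p s) :
    ∃ p' s' : α → α → Prop,
      (∀ a b, p a b → p' a b) ∧ (∀ a b, s a b → s' a b) ∧ QSMS Δ p' s' := by
  classical
  obtain ⟨hpΔ, hsΔ, hpirr, hsirr, hpre⟩ := h
  -- Key lemma: on any subset Φ of Δ there is a relation Q containing p|Φ,
  -- disjoint from the converses of p and s, irreflexive, transitive and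
  -- satisfying the (∗)-condition.
  have key : ∀ n (Φ : Finset α), Φ.card ≤ n → Φ ⊆ Δ →
      ∃ Q : α → α → Prop,
        (∀ a b, Q a b → a ∈ Φ ∧ b ∈ Φ) ∧
        (∀ a b, a ∈ Φ → b ∈ Φ → p a b → Q a b) ∧
        (∀ a b, a ∈ Φ → b ∈ Φ → (p a b ∨ s a b) → ¬ Q b a) ∧
        (∀ a, ¬ Q a a) ∧
        (∀ a b c, Q a b → Q b c → Q a c) ∧
        (∀ x y z t, Q x y → Q z t →
          x = z ∨ Q x z ∨ Q z x ∨ y = t ∨ Q y t ∨ Q t y ∨ (Q x t ∧ Q z y)) := by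
    intro n
    induction n with
    | zero =>
      intro Φ hc _
      have hΦ : Φ = ∅ := Finset.card_eq_zero.mp (Nat.le_zero.mp hc)
      subst hΦ
      exact ⟨fun _ _ => False, by simp, by simp, by simp, by simp, by simp, by simp⟩
    | succ n ih =>
      intro Φ hc hsub
      rcases Φ.eq_empty_or_nonempty with rfl | hne
      · exact ⟨fun _ _ => False, by simp, by simp, by simp, by simp, by simp, by simp⟩
      by_cases hcsc : ∀ a ∈ Φ, ∀ b ∈ Φ,
          Relation.ReflTransGen (fun u v => u ∈ Φ ∧ v ∈ Φ ∧ (p u v ∨ s u v)) a b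
      · -- Φ is a CSC-subset: peel off a pre-dominant.
        obtain ⟨x, hxΦ, hxpre⟩ := hpre Φ hsub ⟨hne, hcsc⟩
        have hcard : (Φ.erase x).card ≤ n := by
          have := Finset.card_erase_of_mem hxΦ
          omega
        obtain ⟨Q, hconf, hP2, hP3, hirr, htr, hstar⟩ :=
          ih (Φ.erase x) hcard ((Finset.erase_subset _ _).trans hsub)
        refine ⟨Q, ?_, ?_, ?_, hirr, htr, hstar⟩
        · intro a b hab
          obtain ⟨ha, hb⟩ := hconf a b hab
          exact ⟨Finset.mem_of_mem_erase ha, Finset.mem_of_mem_erase hb⟩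
        · intro a b ha hb hp
          have hax : a ≠ x := by
            rintro rfl; exact (hxpre b hb).1 hp
          have hbx : b ≠ x := by
            rintro rfl; exact (hxpre a ha).2 hp
          exact hP2 a b (Finset.mem_erase.2 ⟨hax, ha⟩) (Finset.mem_erase.2 ⟨hbx, hb⟩) hp
        · intro a b _ _ hps hQ
          obtain ⟨hb', ha'⟩ := hconf b a hQ
          exact hP3 a b ha' hb' hps hQ
      · -- Φ has a directed cut: series composition.
        push_neg at hcsc
        obtain ⟨a, ha, b, hb, hnr⟩ := hcsc
        set R : α → α → Prop := fun u v => u ∈ Φ ∧ v ∈ Φ ∧ (p u v ∨ s u v) with hR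
        set B : Finset α := Φ.filter (fun v => Relation.ReflTransGen R a v) with hBdef
        set A : Finset α := Φ \ B with hAdef
        have haB : a ∈ B := Finset.mem_filter.2 ⟨ha, Relation.ReflTransGen.refl⟩
        have hbA : b ∈ A := Finset.mem_sdiff.2 ⟨hb, fun hmem => hnr (Finset.mem_filter.1 hmem).2⟩
        have hAsub : A ⊆ Φ := Finset.sdiff_subset
        have hBsub : B ⊆ Φ := Finset.filter_subset _ _
        have hdisj : ∀ u, u ∈ A → u ∈ B → False := fun u hA hB =>
          (Finset.mem_sdiff.1 hA).2 hB
        have hanA : a ∉ A := fun hmem => hdisj a hmem haB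
        have hbnB : b ∉ B := (Finset.mem_sdiff.1 hbA).2
        have hAcard : A.card ≤ n := by
          have h1 : A ⊂ Φ := ⟨hAsub, fun hsub' => hanA (hsub' ha)⟩
          have := Finset.card_lt_card h1
          omega
        have hBcard : B.card ≤ n := by
          have h1 : B ⊂ Φ := ⟨hBsub, fun hsub' => hbnB (hsub' hb)⟩
          have := Finset.card_lt_card h1
          omega
        -- no (p ∪ s)-edge goes from B to A
        have hcut : ∀ u v, u ∈ B → v ∈ A → (p u v ∨ s u v) → False := by
          intro u v hu hv hps
          have hreach : Relation.ReflTransGen R a v :=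
            (Finset.mem_filter.1 hu).2.tail ⟨hBsub hu, hAsub hv, hps⟩
          exact (Finset.mem_sdiff.1 hv).2 (Finset.mem_filter.2 ⟨hAsub hv, hreach⟩)
        obtain ⟨QA, hAconf, hAP2, hAP3, hAirr, hAtr, hAstar⟩ :=
          ih A hAcard (hAsub.trans hsub)
        obtain ⟨QB, hBconf, hBP2, hBP3, hBirr, hBtr, hBstar⟩ :=
          ih B hBcard (hBsub.trans hsub)
        refine ⟨fun u v => QA u v ∨ QB u v ∨ (u ∈ A ∧ v ∈ B), ?_, ?_, ?_, ?_, ?_, ?_⟩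
        · rintro u v (h' | h' | ⟨h1, h2⟩)
          · exact ⟨hAsub (hAconf u v h').1, hAsub (hAconf u v h').2⟩
          · exact ⟨hBsub (hBconf u v h').1, hBsub (hBconf u v h').2⟩
          · exact ⟨hAsub h1, hBsub h2⟩
        · -- contains p
          intro u v hu hv hp
          have huAB : u ∈ A ∨ u ∈ B := by
            by_cases h' : u ∈ B
            · exact Or.inr h'
            · exact Or.inl (Finset.mem_sdiff.2 ⟨hu, h'⟩)
          have hvAB : v ∈ A ∨ v ∈ B := by
            by_cases h' : v ∈ B
            · exact Or.inr h'
            · exact Or.inl (Finset.mem_sdiff.2 ⟨hv, h'⟩)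
          rcases huAB with huA | huB
          · rcases hvAB with hvA | hvB
            · exact Or.inl (hAP2 u v huA hvA hp)
            · exact Or.inr (Or.inr ⟨huA, hvB⟩)
          · rcases hvAB with hvA | hvB
            · exact absurd (Or.inl hp) (fun h' => hcut u v huB hvA h')
            · exact Or.inr (Or.inl (hBP2 u v huB hvB hp))
        · -- avoids converses
          rintro u v _ _ hps (h' | h' | ⟨h1, h2⟩)
          · obtain ⟨hv', hu'⟩ := hAconf v u h'
            exact hAP3 u v hu' hv' hps h'
          · obtain ⟨hv', hu'⟩ := hBconf v u h'
            exact hBP3 u v hu' hv' hps h'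
          · exact hcut u v h2 h1 hps
        · -- irreflexive
          rintro u (h' | h' | ⟨h1, h2⟩)
          · exact hAirr u h'
          · exact hBirr u h'
          · exact hdisj u h1 h2
        · -- transitive
          rintro u v w (h1 | h1 | h1) (h2 | h2 | h2)
          · exact Or.inl (hAtr u v w h1 h2)
          · exact absurd (hBconf v w h2).1 (fun h' => hdisj v (hAconf u v h1).2 h')
          · exact Or.inr (Or.inr ⟨(hAconf u v h1).1, h2.2⟩)
          · exact absurd (hAconf v w h2).1 (fun h' => hdisj v h' (hBconf u v h1).2)
          · exact Or.inr (Or.inl (hBtr u v w h1 h2))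
          · exact absurd h2.1 (fun h' => hdisj v h' (hBconf u v h1).2)
          · exact absurd (hAconf v w h2).1 (fun h' => hdisj v h' h1.2)
          · exact Or.inr (Or.inr ⟨h1.1, (hBconf v w h2).2⟩)
          · exact absurd h2.1 (fun h' => hdisj v h' h1.2)
        · -- (∗)
          rintro x y z t (h1 | h1 | h1) (h2 | h2 | h2)
          · -- both in QA
            rcases hAstar x y z t h1 h2 with h' | h' | h' | h' | h' | h' | ⟨h', h''⟩
            · exact Or.inl h'
            · exact Or.inr (Or.inl (Or.inl h'))
            · exact Or.inr (Or.inr (Or.inl (Or.inl h')))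
            · exact Or.inr (Or.inr (Or.inr (Or.inl h')))
            · exact Or.inr (Or.inr (Or.inr (Or.inr (Or.inl (Or.inl h')))))
            · exact Or.inr (Or.inr (Or.inr (Or.inr (Or.inr (Or.inl (Or.inl h'))))))
            · exact Or.inr (Or.inr (Or.inr (Or.inr (Or.inr (Or.inr ⟨Or.inl h', Or.inl h''⟩)))))
          · -- QA, QB : sources comparable, x ∈ A, z ∈ B
            exact Or.inr (Or.inl (Or.inr (Or.inr ⟨(hAconf x y h1).1, (hBconf z t h2).1⟩)))
          · -- QA, A×B : targets comparable, y ∈ A, t ∈ B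
            exact Or.inr (Or.inr (Or.inr (Or.inr (Or.inl
              (Or.inr (Or.inr ⟨(hAconf x y h1).2, h2.2⟩))))))
          · -- QB, QA : z ∈ A, x ∈ B, Q z x
            exact Or.inr (Or.inr (Or.inl (Or.inr (Or.inr ⟨(hAconf z t h2).1, (hBconf x y h1).1⟩))))
          · -- both in QB
            rcases hBstar x y z t h1 h2 with h' | h' | h' | h' | h' | h' | ⟨h', h''⟩
            · exact Or.inl h'
            · exact Or.inr (Or.inl (Or.inr (Or.inl h')))
            · exact Or.inr (Or.inr (Or.inl (Or.inr (Or.inl h'))))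
            · exact Or.inr (Or.inr (Or.inr (Or.inl h')))
            · exact Or.inr (Or.inr (Or.inr (Or.inr (Or.inl (Or.inr (Or.inl h'))))))
            · exact Or.inr (Or.inr (Or.inr (Or.inr (Or.inr (Or.inl (Or.inr (Or.inl h')))))))
            · exact Or.inr (Or.inr (Or.inr (Or.inr (Or.inr (Or.inr
                ⟨Or.inr (Or.inl h'), Or.inr (Or.inl h'')⟩)))))
          · -- QB, A×B : z ∈ A, x ∈ B, Q z x
            exact Or.inr (Or.inr (Or.inl (Or.inr (Or.inr ⟨h2.1, (hBconf x y h1).1⟩))))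
          · -- A×B, QA : t ∈ A, y ∈ B, Q t y
            exact Or.inr (Or.inr (Or.inr (Or.inr (Or.inr (Or.inl
              (Or.inr (Or.inr ⟨(hAconf z t h2).2, h1.2⟩)))))))
          · -- A×B, QB : x ∈ A, z ∈ B, Q x z
            exact Or.inr (Or.inl (Or.inr (Or.inr ⟨h1.1, (hBconf z t h2).1⟩)))
          · -- A×B, A×B : cross
            exact Or.inr (Or.inr (Or.inr (Or.inr (Or.inr (Or.inr
              ⟨Or.inr (Or.inr ⟨h1.1, h2.2⟩), Or.inr (Or.inr ⟨h2.1, h1.2⟩)⟩)))))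
  obtain ⟨Q, hconf, hP2, hP3, hirr, htr, hstar⟩ := key Δ.card Δ le_rfl (Finset.Subset.refl _)
  have hasym : ∀ a b, Q a b → ¬ Q b a := fun a b h1 h2 => hirr a (htr a b a h1 h2)
  have hQne : ∀ a b, Q a b → a ≠ b := by
    rintro a b h1 rfl; exact hirr a h1
  refine ⟨Q, fun u v => u ∈ Δ ∧ v ∈ Δ ∧ u ≠ v ∧ ¬ Q v u, ?_, ?_, ?_, ?_, ?_, ?_, ?_, ?_⟩
  · intro a b hab
    exact hP2 a b (hpΔ a b hab).1 (hpΔ a b hab).2 hab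
  · intro a b hab
    have ha := (hsΔ a b hab).1
    have hb := (hsΔ a b hab).2
    have hne : a ≠ b := by rintro rfl; exact hsirr a hab
    exact ⟨ha, hb, hne, hP3 a b ha hb (Or.inr hab) ⟩
  · exact hconf
  · exact fun a b hab => ⟨hab.1, hab.2.1⟩
  · rintro x ⟨_, _, hne, _⟩
    exact hne rfl
  · -- QSMS2
    intro x hx y hy
    constructor
    · intro hq
      exact ⟨⟨hx, hy, hQne x y hq, hasym x y hq⟩, fun hs => hs.2.2.2 hq⟩
    · rintro ⟨⟨_, _, hne, _⟩, hns⟩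
      by_contra hq
      exact hns ⟨hy, hx, hne.symm, hq⟩
  · -- QSMS3
    intro x hx y hy
    constructor
    · intro hne
      by_cases h1 : Q x y
      · exact Or.inl h1
      by_cases h2 : Q y x
      · exact Or.inr (Or.inl h2)
      exact Or.inr (Or.inr ⟨⟨hx, hy, hne, h2⟩, ⟨hy, hx, hne.symm, h1⟩⟩)
    · rintro (h1 | h1 | ⟨h1, h2⟩)
      · exact hQne x y h1
      · exact (hQne y x h1).symm
      · exact h1.2.2.1
  · -- QSMS4
    intro x y z t hxy hzt
    rcases hstar x y z t hxy hzt with h' | h' | h' | h' | h' | h' | ⟨h', h''⟩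
    · subst h'
      exact Or.inl ⟨hzt, hxy⟩
    · exact Or.inr (Or.inl ⟨h', htr x z t h' hzt⟩)
    · exact Or.inr (Or.inr (Or.inl ⟨h', htr z x y h' hxy⟩))
    · subst h'
      exact Or.inl ⟨hxy, hzt⟩
    · exact Or.inr (Or.inr (Or.inr (Or.inr ⟨h', htr x y t hxy h'⟩)))
    · exact Or.inr (Or.inr (Or.inr (Or.inl ⟨h', htr z t y hzt h'⟩)))
    · exact Or.inl ⟨h', h''⟩
end

section
/- A relational structure is a QSA-structure if and only if at least one of its extensions is a QSM-structure. -/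
/-- Arithmetic core of QSMS4 for laminar interval families. -/
private lemma lam4 {lx rx ly ry lz rz lt rt : ℤ}
    (hx : lx ≤ rx) (hy : ly ≤ ry) (hz : lz ≤ rz) (ht : lt ≤ rt)
    (hxt : rx < lt ∨ rt < lx ∨ (lx ≤ lt ∧ rt ≤ rx) ∨ (lt ≤ lx ∧ rx ≤ rt))
    (hzy : rz < ly ∨ ry < lz ∨ (lz ≤ ly ∧ ry ≤ rz) ∨ (ly ≤ lz ∧ rz ≤ ry))
    (hpxy : rx < ly) (hpzt : rz < lt) :
    (rx < lt ∧ rz < ly) ∨ (rx < lz ∧ rx < lt) ∨ (rz < lx ∧ rz < ly) ∨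
      (rt < ly ∧ rz < ly) ∨ (ry < lt ∧ rx < lt) := by
  rcases hxt with h1 | h1 | ⟨h1, h2⟩ | ⟨h1, h2⟩
  · rcases hzy with h3 | h3 | ⟨h3, h4⟩ | ⟨h3, h4⟩
    · exact Or.inl ⟨h1, h3⟩
    · exact Or.inr (Or.inr (Or.inr (Or.inr ⟨by linarith, h1⟩)))
    · exact Or.inr (Or.inr (Or.inr (Or.inr ⟨by linarith, h1⟩)))
    · exact Or.inr (Or.inl ⟨by linarith, h1⟩)
  · exact Or.inr (Or.inr (Or.inl ⟨by linarith, by linarith⟩))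
  · exact Or.inr (Or.inr (Or.inr (Or.inl ⟨by linarith, by linarith⟩)))
  · exact Or.inr (Or.inr (Or.inl ⟨by linarith, by linarith⟩))

/-- Forward construction: a QSA-structure admits a laminar interval
representation compatible with p and s. -/
private lemma exists_intervals {α : Type*} (Δ : Finset α) (p s : α → α → Prop)
    (hQ : ∀ Φ : Finset α, Φ ⊆ Δ → IsCSC p s Φ → ∃ x, PreDom p Φ x) :
    ∀ n (D : Finset α), D.card ≤ n → D ⊆ Δ →
      ∃ l r : α → ℤ,
        (∀ x ∈ D, l x ≤ r x) ∧
        (∀ x ∈ D, ∀ y ∈ D,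
          r x < l y ∨ r y < l x ∨ (l x ≤ l y ∧ r y ≤ r x) ∨ (l y ≤ l x ∧ r x ≤ r y)) ∧
        (∀ x ∈ D, ∀ y ∈ D, p x y → r x < l y) ∧
        (∀ x ∈ D, ∀ y ∈ D, s x y → l x ≤ r y) := by
  classical
  intro n
  induction n with
  | zero =>
      intro D hcard _
      have hD : D = ∅ := Finset.card_eq_zero.mp (Nat.le_zero.mp hcard)
      subst hD
      exact ⟨fun _ => 0, fun _ => 0, by simp, by simp, by simp, by simp⟩
  | succ n IH =>
      intro D hcard hDΔ
      rcases D.eq_empty_or_nonempty with rfl | hne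
      · exact ⟨fun _ => 0, fun _ => 0, by simp, by simp, by simp, by simp⟩
      set E : α → α → Prop := fun u v => u ∈ D ∧ v ∈ D ∧ (p u v ∨ s u v) with hE
      set R : α → α → Prop := fun u v => Relation.ReflTransGen E u v with hR
      obtain ⟨x, hxD, hxmin⟩ :=
        D.exists_min_image (fun z => (D.filter (fun y => R y z)).card) hne
      set C : Finset α := D.filter (fun y => R y x ∧ R x y) with hC
      have hCD : C ⊆ D := Finset.filter_subset _ _
      have hxC : x ∈ C := Finset.mem_filter.mpr
        ⟨hxD, Relation.ReflTransGen.refl, Relation.ReflTransGen.refl⟩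
      -- C is a source SCC: no edges from outside C into C
      have hsrc : ∀ u ∈ D, u ∉ C → ∀ v ∈ C, ¬ (p u v ∨ s u v) := by
        intro u huD huC v hvC hedge
        have hvD : v ∈ D := hCD hvC
        have hvx : R v x := (Finset.mem_filter.mp hvC).2.1
        have hux : R u x := Relation.ReflTransGen.head ⟨huD, hvD, hedge⟩ hvx
        have hnxu : ¬ R x u := fun hxu => huC (Finset.mem_filter.mpr ⟨huD, hux, hxu⟩)
        have hss : D.filter (fun y => R y u) ⊂ D.filter (fun y => R y x) := by
          rw [Finset.ssubset_def]
          constructor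
          · intro w hw
            rcases Finset.mem_filter.mp hw with ⟨hwD, hwu⟩
            exact Finset.mem_filter.mpr ⟨hwD, hwu.trans hux⟩
          · intro hsub
            have hx' : x ∈ D.filter (fun y => R y u) :=
              hsub (Finset.mem_filter.mpr ⟨hxD, Relation.ReflTransGen.refl⟩)
            exact hnxu (Finset.mem_filter.mp hx').2
        exact absurd (hxmin u huD) (not_le.mpr (Finset.card_lt_card hss))
      -- paths between elements of C stay inside C
      have hchain : ∀ a b : α, Relation.ReflTransGen E a b → R x a → R b x →
          Relation.ReflTransGen (fun u v => u ∈ C ∧ v ∈ C ∧ (p u v ∨ s u v)) a b := by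
        intro a b hab
        induction hab using Relation.ReflTransGen.head_induction_on with
        | refl => intro _ _; exact Relation.ReflTransGen.refl
        | head h htail ih =>
            rename_i a' c
            intro hxa hbx
            have hcx : R c x := htail.trans hbx
            have hxc : R x c := hxa.tail h
            have hax : R a' x := Relation.ReflTransGen.head h hcx
            have haC : a' ∈ C := Finset.mem_filter.mpr ⟨h.1, hax, hxa⟩
            have hcC : c ∈ C := Finset.mem_filter.mpr ⟨h.2.1, hcx, hxc⟩
            exact Relation.ReflTransGen.head ⟨haC, hcC, h.2.2⟩ (ih hxc hbx)
      have hCcsc : IsCSC p s C := by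
        refine ⟨⟨x, hxC⟩, ?_⟩
        intro a ha b hb
        have hax : R a x := (Finset.mem_filter.mp ha).2.1
        have hxa : R x a := (Finset.mem_filter.mp ha).2.2
        have hbx : R b x := (Finset.mem_filter.mp hb).2.1
        have hxb : R x b := (Finset.mem_filter.mp hb).2.2
        exact (hchain a x hax hxa Relation.ReflTransGen.refl).trans
              (hchain x b hxb Relation.ReflTransGen.refl hbx)
      obtain ⟨e, heC, hePre⟩ := hQ C (hCD.trans hDΔ) hCcsc
      set P : Finset α := C.filter (fun z => ∀ y ∈ C, ¬ p z y ∧ ¬ p y z) with hPdef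
      have heP : e ∈ P := Finset.mem_filter.mpr ⟨heC, hePre⟩
      have hPC : P ⊆ C := Finset.filter_subset _ _
      set D1 : Finset α := C \ P with hD1def
      set D2 : Finset α := D \ C with hD2def
      have hD1C : D1 ⊆ C := Finset.sdiff_subset
      have hD1card : D1.card ≤ n := by
        have hsub : D1 ⊆ D.erase e := by
          intro z hz
          rcases Finset.mem_sdiff.mp hz with ⟨hzC, hzP⟩
          exact Finset.mem_erase.mpr ⟨fun h => hzP (h ▸ heP), hCD hzC⟩
        calc D1.card ≤ (D.erase e).card := Finset.card_le_card hsub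
          _ = D.card - 1 := Finset.card_erase_of_mem (hCD heC)
          _ ≤ n := by omega
      have hD2card : D2.card ≤ n := by
        have hsub : D2 ⊆ D.erase x := by
          intro z hz
          rcases Finset.mem_sdiff.mp hz with ⟨hzD, hzC⟩
          exact Finset.mem_erase.mpr ⟨fun h => hzC (h ▸ hxC), hzD⟩
        calc D2.card ≤ (D.erase x).card := Finset.card_le_card hsub
          _ = D.card - 1 := Finset.card_erase_of_mem hxD
          _ ≤ n := by omega
      obtain ⟨l1, r1, h1a, h1b, h1c, h1d⟩ :=
        IH D1 hD1card (hD1C.trans (hCD.trans hDΔ))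
      obtain ⟨l2, r2, h2a, h2b, h2c, h2d⟩ :=
        IH D2 hD2card (Finset.sdiff_subset.trans hDΔ)
      set m1 : ℤ := (insert (0:ℤ) (D1.image l1)).min' (Finset.insert_nonempty _ _) with hm1
      set M1 : ℤ := (insert (0:ℤ) (D1.image r1)).max' (Finset.insert_nonempty _ _) with hM1
      set m2 : ℤ := (insert (0:ℤ) (D2.image l2)).min' (Finset.insert_nonempty _ _) with hm2
      set σ : ℤ := M1 + 1 - m2 with hσ
      have hm10 : m1 ≤ 0 := Finset.min'_le _ _ (Finset.mem_insert_self _ _)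
      have hM10 : (0:ℤ) ≤ M1 := Finset.le_max' _ _ (Finset.mem_insert_self _ _)
      have hm1le : ∀ z ∈ D1, m1 ≤ l1 z := fun z hz =>
        Finset.min'_le _ _ (Finset.mem_insert_of_mem (Finset.mem_image_of_mem _ hz))
      have hM1ge : ∀ z ∈ D1, r1 z ≤ M1 := fun z hz =>
        Finset.le_max' _ _ (Finset.mem_insert_of_mem (Finset.mem_image_of_mem _ hz))
      have hm2le : ∀ z ∈ D2, m2 ≤ l2 z := fun z hz =>
        Finset.min'_le _ _ (Finset.mem_insert_of_mem (Finset.mem_image_of_mem _ hz))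
      set l : α → ℤ := fun z => if z ∈ D2 then l2 z + σ else if z ∈ P then m1 else l1 z
        with hl
      set r : α → ℤ := fun z => if z ∈ D2 then r2 z + σ else if z ∈ P then M1 else r1 z
        with hr
      have hCnot2 : ∀ z ∈ C, z ∉ D2 := by
        intro z hz h2
        exact (Finset.mem_sdiff.mp h2).2 hz
      have hv1 : ∀ z ∈ D1, l z = l1 z ∧ r z = r1 z := by
        intro z hz
        rcases Finset.mem_sdiff.mp hz with ⟨hzC, hzP⟩
        have h2 : z ∉ D2 := hCnot2 z hzC
        constructor
        · simp only [hl, if_neg h2, if_neg hzP]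
        · simp only [hr, if_neg h2, if_neg hzP]
      have hvP : ∀ z ∈ P, l z = m1 ∧ r z = M1 := by
        intro z hz
        have h2 : z ∉ D2 := hCnot2 z (hPC hz)
        constructor
        · simp only [hl, if_neg h2, if_pos hz]
        · simp only [hr, if_neg h2, if_pos hz]
      have hv2 : ∀ z ∈ D2, l z = l2 z + σ ∧ r z = r2 z + σ := by
        intro z hz
        constructor
        · simp only [hl, if_pos hz]
        · simp only [hr, if_pos hz]
      have htri : ∀ z ∈ D, z ∈ D2 ∨ z ∈ P ∨ z ∈ D1 := by
        intro z hz
        by_cases hzC : z ∈ C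
        · by_cases hzP : z ∈ P
          · exact Or.inr (Or.inl hzP)
          · exact Or.inr (Or.inr (Finset.mem_sdiff.mpr ⟨hzC, hzP⟩))
        · exact Or.inl (Finset.mem_sdiff.mpr ⟨hz, hzC⟩)
      have hbC : ∀ z ∈ C, m1 ≤ l z ∧ l z ≤ r z ∧ r z ≤ M1 := by
        intro z hz
        by_cases hzP : z ∈ P
        · rcases hvP z hzP with ⟨e1, e2⟩
          rw [e1, e2]
          exact ⟨le_refl _, by linarith, le_refl _⟩
        · have hz1 : z ∈ D1 := Finset.mem_sdiff.mpr ⟨hz, hzP⟩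
          rcases hv1 z hz1 with ⟨e1, e2⟩
          rw [e1, e2]
          exact ⟨hm1le z hz1, h1a z hz1, hM1ge z hz1⟩
      have hb2 : ∀ z ∈ D2, M1 < l z ∧ l z ≤ r z := by
        intro z hz
        rcases hv2 z hz with ⟨e1, e2⟩
        rw [e1, e2]
        have := hm2le z hz
        have := h2a z hz
        constructor <;> [skip; linarith]
        simp only [hσ]; linarith
      refine ⟨l, r, ?_, ?_, ?_, ?_⟩
      · -- l ≤ r
        intro a ha
        rcases htri a ha with h | h | h
        · exact (hb2 a h).2
        · exact (hbC a (hPC h)).2.1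
        · exact (hbC a (hD1C h)).2.1
      · -- laminar
        intro a ha b hb
        rcases htri a ha with hA | hA | hA
        · rcases htri b hb with hB | hB | hB
          · rcases hv2 a hA with ⟨e1, e2⟩
            rcases hv2 b hB with ⟨f1, f2⟩
            rw [e1, e2, f1, f2]
            rcases h2b a hA b hB with h | h | ⟨h, h'⟩ | ⟨h, h'⟩
            · exact Or.inl (by linarith)
            · exact Or.inr (Or.inl (by linarith))
            · exact Or.inr (Or.inr (Or.inl ⟨by linarith, by linarith⟩))
            · exact Or.inr (Or.inr (Or.inr ⟨by linarith, by linarith⟩))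
          · -- a ∈ D2, b ∈ C
            have h1 := (hbC b (hPC hB)).2.2
            have h2 := (hb2 a hA).1
            exact Or.inr (Or.inl (by linarith))
          · have h1 := (hbC b (hD1C hB)).2.2
            have h2 := (hb2 a hA).1
            exact Or.inr (Or.inl (by linarith))
        · rcases htri b hb with hB | hB | hB
          · have h1 := (hbC a (hPC hA)).2.2
            have h2 := (hb2 b hB).1
            exact Or.inl (by linarith)
          · rcases hvP a hA with ⟨e1, e2⟩
            rcases hvP b hB with ⟨f1, f2⟩
            rw [e1, e2, f1, f2]
            exact Or.inr (Or.inr (Or.inl ⟨le_refl _, le_refl _⟩))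
          · rcases hvP a hA with ⟨e1, e2⟩
            rcases hv1 b hB with ⟨f1, f2⟩
            rw [e1, e2, f1, f2]
            exact Or.inr (Or.inr (Or.inl ⟨hm1le b hB, hM1ge b hB⟩))
        · rcases htri b hb with hB | hB | hB
          · have h1 := (hbC a (hD1C hA)).2.2
            have h2 := (hb2 b hB).1
            exact Or.inl (by linarith)
          · rcases hv1 a hA with ⟨e1, e2⟩
            rcases hvP b hB with ⟨f1, f2⟩
            rw [e1, e2, f1, f2]
            exact Or.inr (Or.inr (Or.inr ⟨hm1le a hA, hM1ge a hA⟩))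
          · rcases hv1 a hA with ⟨e1, e2⟩
            rcases hv1 b hB with ⟨f1, f2⟩
            rw [e1, e2, f1, f2]
            exact h1b a hA b hB
      · -- p
        intro a ha b hb hpab
        rcases htri a ha with hA | hA | hA
        · rcases htri b hb with hB | hB | hB
          · rcases hv2 a hA with ⟨e1, e2⟩
            rcases hv2 b hB with ⟨f1, f2⟩
            rw [e2, f1]
            have := h2c a hA b hB hpab
            linarith
          · exact absurd (Or.inl hpab)
              (hsrc a ((Finset.mem_sdiff.mp hA).1) ((Finset.mem_sdiff.mp hA).2) b (hPC hB))
          · exact absurd (Or.inl hpab)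
              (hsrc a ((Finset.mem_sdiff.mp hA).1) ((Finset.mem_sdiff.mp hA).2) b (hD1C hB))
        · rcases htri b hb with hB | hB | hB
          · have h1 := (hbC a (hPC hA)).2.2
            have h2 := (hb2 b hB).1
            linarith
          · exact absurd hpab ((Finset.mem_filter.mp hA).2 b (hPC hB)).1
          · exact absurd hpab ((Finset.mem_filter.mp hA).2 b (hD1C hB)).1
        · rcases htri b hb with hB | hB | hB
          · have h1 := (hbC a (hD1C hA)).2.2
            have h2 := (hb2 b hB).1
            linarith
          · exact absurd hpab ((Finset.mem_filter.mp hB).2 a (hD1C hA)).2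
          · rcases hv1 a hA with ⟨e1, e2⟩
            rcases hv1 b hB with ⟨f1, f2⟩
            rw [e2, f1]
            exact h1c a hA b hB hpab
      · -- s
        intro a ha b hb hsab
        rcases htri a ha with hA | hA | hA
        · rcases htri b hb with hB | hB | hB
          · rcases hv2 a hA with ⟨e1, e2⟩
            rcases hv2 b hB with ⟨f1, f2⟩
            rw [e1, f2]
            have := h2d a hA b hB hsab
            linarith
          · exact absurd (Or.inr hsab)
              (hsrc a ((Finset.mem_sdiff.mp hA).1) ((Finset.mem_sdiff.mp hA).2) b (hPC hB))
          · exact absurd (Or.inr hsab)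
              (hsrc a ((Finset.mem_sdiff.mp hA).1) ((Finset.mem_sdiff.mp hA).2) b (hD1C hB))
        · rcases htri b hb with hB | hB | hB
          · have h1 := (hbC a (hPC hA)).1
            have h2 := (hbC a (hPC hA)).2.1
            have h3 := (hbC a (hPC hA)).2.2
            have h4 := (hb2 b hB).1
            have h5 := (hb2 b hB).2
            linarith
          · rcases hvP a hA with ⟨e1, _⟩
            rcases hvP b hB with ⟨_, f2⟩
            rw [e1, f2]
            linarith
          · rcases hvP a hA with ⟨e1, _⟩
            rcases hv1 b hB with ⟨_, f2⟩
            rw [e1, f2]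
            have := hm1le b hB
            have := h1a b hB
            linarith
        · rcases htri b hb with hB | hB | hB
          · have h2 := (hbC a (hD1C hA)).2.1
            have h3 := (hbC a (hD1C hA)).2.2
            have h4 := (hb2 b hB).1
            have h5 := (hb2 b hB).2
            linarith
          · rcases hv1 a hA with ⟨e1, _⟩
            rcases hvP b hB with ⟨_, f2⟩
            rw [e1, f2]
            have := h1a a hA
            have := hM1ge a hA
            linarith
          · rcases hv1 a hA with ⟨e1, _⟩
            rcases hv1 b hB with ⟨_, f2⟩
            rw [e1, f2]
            exact h1d a hA b hB hsab

/-- A relational structure is a QSA-structure iff at least one of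
its extensions is a QSM-structure. -/
theorem qsas_iff_qsms_extension {α : Type*}
    (Δ : Finset α) (p s : α → α → Prop)
    (hp : ∀ a b, p a b → a ∈ Δ ∧ b ∈ Δ) (hs : ∀ a b, s a b → a ∈ Δ ∧ b ∈ Δ)
    (hirrp : ∀ x, ¬ p x x) (hirrs : ∀ x, ¬ s x x) :
    QSAS Δ p s ↔
      ∃ p' s' : α → α → Prop,
        (∀ a b, p a b → p' a b) ∧ (∀ a b, s a b → s' a b) ∧ QSMS Δ p' s' := by
  constructor
  · -- forward: QSAS gives a laminar interval representation, hence a QSM extension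
    intro hQSAS
    obtain ⟨-, -, -, -, hmain⟩ := hQSAS
    obtain ⟨l, r, ha, hb, hc, hd⟩ :=
      exists_intervals Δ p s hmain Δ.card Δ le_rfl (Finset.Subset.refl _)
    refine ⟨fun a b => a ∈ Δ ∧ b ∈ Δ ∧ r a < l b,
            fun a b => a ∈ Δ ∧ b ∈ Δ ∧ a ≠ b ∧ l a ≤ r b, ?_, ?_, ?_⟩
    · intro a b hab
      obtain ⟨haΔ, hbΔ⟩ := hp a b hab
      exact ⟨haΔ, hbΔ, hc a haΔ b hbΔ hab⟩
    · intro a b hab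
      obtain ⟨haΔ, hbΔ⟩ := hs a b hab
      refine ⟨haΔ, hbΔ, ?_, hd a haΔ b hbΔ hab⟩
      rintro rfl; exact hirrs a hab
    · refine ⟨fun a b h => ⟨h.1, h.2.1⟩, fun a b h => ⟨h.1, h.2.1⟩, ?_, ?_, ?_, ?_⟩
      · rintro x ⟨_, _, hxx, _⟩; exact hxx rfl
      · intro a haΔ b hbΔ
        have h1 := ha a haΔ; have h2 := ha b hbΔ
        constructor
        · rintro ⟨_, _, hab⟩
          refine ⟨⟨haΔ, hbΔ, ?_, by linarith⟩, ?_⟩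
          · rintro rfl; linarith
          · rintro ⟨_, _, _, hba⟩; linarith
        · rintro ⟨⟨_, _, hne, hlab⟩, hn⟩
          refine ⟨haΔ, hbΔ, ?_⟩
          by_contra hcon
          exact hn ⟨hbΔ, haΔ, hne.symm, not_lt.mp hcon⟩
      · intro a haΔ b hbΔ
        have h1 := ha a haΔ; have h2 := ha b hbΔ
        constructor
        · intro hne
          by_cases hab : r a < l b
          · exact Or.inl ⟨haΔ, hbΔ, hab⟩
          · by_cases hba : r b < l a
            · exact Or.inr (Or.inl ⟨hbΔ, haΔ, hba⟩)
            · exact Or.inr (Or.inr ⟨⟨haΔ, hbΔ, hne, not_lt.mp hba⟩,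
                ⟨hbΔ, haΔ, hne.symm, not_lt.mp hab⟩⟩)
        · rintro (⟨_, _, h⟩ | ⟨_, _, h⟩ | ⟨⟨_, _, hne, _⟩, _⟩)
          · rintro rfl; linarith
          · rintro rfl; linarith
          · exact hne
      · rintro x y z t ⟨hxΔ, hyΔ, hxy⟩ ⟨hzΔ, htΔ, hzt⟩
        have h := lam4 (ha x hxΔ) (ha y hyΔ) (ha z hzΔ) (ha t htΔ)
          (hb x hxΔ t htΔ) (hb z hzΔ y hyΔ) hxy hzt
        rcases h with ⟨u1, u2⟩ | ⟨u1, u2⟩ | ⟨u1, u2⟩ | ⟨u1, u2⟩ | ⟨u1, u2⟩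
        · exact Or.inl ⟨⟨hxΔ, htΔ, u1⟩, ⟨hzΔ, hyΔ, u2⟩⟩
        · exact Or.inr (Or.inl ⟨⟨hxΔ, hzΔ, u1⟩, ⟨hxΔ, htΔ, u2⟩⟩)
        · exact Or.inr (Or.inr (Or.inl ⟨⟨hzΔ, hxΔ, u1⟩, ⟨hzΔ, hyΔ, u2⟩⟩))
        · exact Or.inr (Or.inr (Or.inr (Or.inl ⟨⟨htΔ, hyΔ, u1⟩, ⟨hzΔ, hyΔ, u2⟩⟩)))
        · exact Or.inr (Or.inr (Or.inr (Or.inr ⟨⟨hyΔ, htΔ, u1⟩, ⟨hxΔ, htΔ, u2⟩⟩)))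
  · -- backward: any QSM extension forces the QSA property
    rintro ⟨p', s', hpp', hss', h1, h2, h3, h4, h5, h6⟩
    refine ⟨hp, hs, hirrp, hirrs, ?_⟩
    intro Φ hΦΔ hCSC
    classical
    have hps' : ∀ a b, p' a b → s' a b := by
      intro a b h
      obtain ⟨haΔ, hbΔ⟩ := h1 a b h
      exact ((h4 a haΔ b hbΔ).mp h).1
    have hirr' : ∀ a, ¬ p' a a := by
      intro a h
      obtain ⟨haΔ, -⟩ := h1 a a h
      have := (h4 a haΔ a haΔ).mp h
      exact this.2 this.1
    have hasym : ∀ a b, p' a b → ¬ p' b a := by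
      intro a b h hba
      obtain ⟨haΔ, hbΔ⟩ := h1 a b h
      exact ((h4 a haΔ b hbΔ).mp h).2 (hps' b a hba)
    have htrans : ∀ a b c, p' a b → p' b c → p' a c := by
      intro a b c hab hbc
      rcases h6 a b b c hab hbc with ⟨h', _⟩ | ⟨_, h'⟩ | ⟨h', _⟩ | ⟨_, h'⟩ | ⟨_, h'⟩
      · exact h'
      · exact h'
      · exact absurd h' (hasym a b hab)
      · exact absurd h' (hirr' b)
      · exact h'
    have h22 : ∀ a b c d, p' a b → p' c d → p' a d ∨ p' c b := by
      intro a b c d hab hcd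
      rcases h6 a b c d hab hcd with ⟨h', _⟩ | ⟨_, h'⟩ | ⟨_, h'⟩ | ⟨_, h'⟩ | ⟨_, h'⟩
      · exact Or.inl h'
      · exact Or.inl h'
      · exact Or.inr h'
      · exact Or.inr h'
      · exact Or.inl h'
    have hnotvw : ∀ w v, s' w v → ¬ p' v w := by
      intro w v hwv hvw
      obtain ⟨hvΔ, hwΔ⟩ := h1 v w hvw
      exact ((h4 v hvΔ w hwΔ).mp hvw).2 hwv
    have hkey : ∀ w v x a, s' w v → p' v x → ¬ p' w x → p' w a → p' x a := by
      intro w v x a hwv hvx hnwx hwa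
      rcases h6 w a v x hwa hvx with ⟨h', _⟩ | ⟨_, h'⟩ | ⟨h', _⟩ | ⟨h', _⟩ | ⟨_, h'⟩
      · exact absurd h' hnwx
      · exact absurd h' hnwx
      · exact absurd h' (hnotvw w v hwv)
      · exact h'
      · exact absurd h' hnwx
    set K : ℕ := Δ.card + 1 with hK
    set m : α → ℕ := fun z =>
      K * (Δ.filter (fun a => p' z a)).card + (Δ.filter (fun a => p' a z)).card with hm
    obtain ⟨x, hxΦ, hxmin⟩ := Φ.exists_min_image m hCSC.1
    refine ⟨x, hxΦ, ?_⟩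
    intro y hyΦ
    constructor
    · intro hpxy
      have hpxy' : p' x y := hpp' x y hpxy
      have hsub : Δ.filter (fun a => p' y a) ⊂ Δ.filter (fun a => p' x a) := by
        rw [Finset.ssubset_def]
        constructor
        · intro a haf
          rcases Finset.mem_filter.mp haf with ⟨haΔ, hya⟩
          exact Finset.mem_filter.mpr ⟨haΔ, htrans x y a hpxy' hya⟩
        · intro hsub'
          have hy : y ∈ Δ.filter (fun a => p' x a) :=
            Finset.mem_filter.mpr ⟨(h1 x y hpxy').2, hpxy'⟩
          exact hirr' y (Finset.mem_filter.mp (hsub' hy)).2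
      have hcu : (Δ.filter (fun a => p' y a)).card < (Δ.filter (fun a => p' x a)).card :=
        Finset.card_lt_card hsub
      have hcd : (Δ.filter (fun a => p' a y)).card < K := by
        have := Finset.card_filter_le Δ (fun a => p' a y)
        omega
      have hlt : m y < m x := by
        have e1 : K * (Δ.filter (fun a => p' y a)).card + K
            ≤ K * (Δ.filter (fun a => p' x a)).card := by
          calc K * (Δ.filter (fun a => p' y a)).card + K
              = K * ((Δ.filter (fun a => p' y a)).card + 1) := by ring
            _ ≤ K * (Δ.filter (fun a => p' x a)).card := Nat.mul_le_mul_left _ hcu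
        simp only [hm]
        linarith [Nat.zero_le (Δ.filter (fun a => p' a x)).card]
      exact absurd (hxmin y hyΦ) (not_le.mpr hlt)
    · intro hpyx
      have hpyx' : p' y x := hpp' y x hpyx
      have hpath := hCSC.2 x hxΦ y hyΦ
      have hlem : ∀ u, Relation.ReflTransGen
          (fun u v => u ∈ Φ ∧ v ∈ Φ ∧ (p u v ∨ s u v)) u y → ¬ p' u x →
          ∃ w v, w ∈ Φ ∧ v ∈ Φ ∧ s' w v ∧ p' v x ∧ ¬ p' w x := by
        intro u hu
        induction hu using Relation.ReflTransGen.head_induction_on with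
        | refl => intro hnyx; exact absurd hpyx' hnyx
        | head h htail ih =>
            rename_i u' c
            intro hnux
            by_cases hcx : p' c x
            · refine ⟨u', c, h.1, h.2.1, ?_, hcx, hnux⟩
              rcases h.2.2 with h' | h'
              · exact hps' _ _ (hpp' _ _ h')
              · exact hss' _ _ h'
            · exact ih hcx
      obtain ⟨w, v, hwΦ, hvΦ, hwv, hvx, hnwx⟩ := hlem x hpath (hirr' x)
      have hup : Δ.filter (fun a => p' w a) ⊆ Δ.filter (fun a => p' x a) := by
        intro a haf
        rcases Finset.mem_filter.mp haf with ⟨haΔ, hwa⟩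
        exact Finset.mem_filter.mpr ⟨haΔ, hkey w v x a hwv hvx hnwx hwa⟩
      have hnvw : ¬ p' v w := hnotvw w v hwv
      have hdown : Δ.filter (fun a => p' a w) ⊂ Δ.filter (fun a => p' a x) := by
        rw [Finset.ssubset_def]
        constructor
        · intro a haf
          rcases Finset.mem_filter.mp haf with ⟨haΔ, haw⟩
          refine Finset.mem_filter.mpr ⟨haΔ, ?_⟩
          rcases h22 a w v x haw hvx with h' | h'
          · exact h'
          · exact absurd h' hnvw
        · intro hsub'
          have hv : v ∈ Δ.filter (fun a => p' a x) :=
            Finset.mem_filter.mpr ⟨(h1 v x hvx).1, hvx⟩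
          exact hnvw (Finset.mem_filter.mp (hsub' hv)).2
      have hcu : (Δ.filter (fun a => p' w a)).card ≤ (Δ.filter (fun a => p' x a)).card :=
        Finset.card_le_card hup
      have hcd : (Δ.filter (fun a => p' a w)).card < (Δ.filter (fun a => p' a x)).card :=
        Finset.card_lt_card hdown
      have hmw : m w < m x := by
        simp only [hm]
        have := Nat.mul_le_mul_left K hcu
        linarith
      exact absurd (hxmin w hwΦ) (not_le.mpr hmw)
end

section
/- Let qsas = (Δ,≺,⊏) be a QSA-structure and x ≠ y ∈ Δ. Then adding x ≺ y or adding y ⊏ x preserves the QSA property in at least one of the two cases: either (Δ, ≺∪{(x,y)}, ⊏) is a QSA-structure or (Δ, ≺, ⊏∪{(y,x)}) is a QSA-structure. -/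
/-- If there is a path using `R` plus one extra edge `(c,d)`, then there is an
`R`-path from the start or an `R`-path from `d` (the suffix after the last use
of the extra edge). -/
private lemma lastEdge {α : Type*} {R : α → α → Prop} {c d a b : α}
    (h : Relation.ReflTransGen (fun u v => R u v ∨ (u = c ∧ v = d)) a b) :
    Relation.ReflTransGen R a b ∨ Relation.ReflTransGen R d b := by
  induction h with
  | refl => exact Or.inl .refl
  | tail _ hstep ih =>
    rcases hstep with hR | ⟨rfl, rfl⟩
    · rcases ih with h1 | h2
      · exact Or.inl (h1.tail hR)
      · exact Or.inr (h2.tail hR)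
    · exact Or.inr .refl

/-- Replace uses of an extra edge `(c,d)` by a given `R`-path from `c` to `d`. -/
private lemma convertPath {α : Type*} {R : α → α → Prop} {c d a b : α}
    (hcd : Relation.ReflTransGen R c d)
    (h : Relation.ReflTransGen (fun u v => R u v ∨ (u = c ∧ v = d)) a b) :
    Relation.ReflTransGen R a b := by
  induction h with
  | refl => exact .refl
  | tail _ hstep ih =>
    rcases hstep with hR | ⟨rfl, rfl⟩
    · exact ih.tail hR
    · exact ih.trans hcd

/-- For a QSA-structure and x ≠ y in its domain, adding x ≺ y or
adding y ⊏ x preserves the QSA property in at least one of the two cases. -/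
theorem qsas_extend_either {α : Type*}
    (Δ : Finset α) (p s : α → α → Prop) (h : QSAS Δ p s)
    (x y : α) (hx : x ∈ Δ) (hy : y ∈ Δ) (hxy : x ≠ y) :
    QSAS Δ (fun a b => p a b ∨ (a = x ∧ b = y)) s ∨
    QSAS Δ p (fun a b => s a b ∨ (a = y ∧ b = x)) := by
  classical
  obtain ⟨hp, hs, hip, his, hq⟩ := h
  by_contra hcon
  push_neg at hcon
  obtain ⟨h1, h2⟩ := hcon
  -- extract a failing CSC-subset for the first extension
  have H1 : ∃ Φ : Finset α, Φ ⊆ Δ ∧ IsCSC (fun a b => p a b ∨ (a = x ∧ b = y)) s Φ ∧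
      ∀ z, ¬ PreDom (fun a b => p a b ∨ (a = x ∧ b = y)) Φ z := by
    by_contra hcon1
    push_neg at hcon1
    refine h1 ⟨?_, hs, ?_, his, ?_⟩
    · rintro a b (hab | ⟨rfl, rfl⟩)
      · exact hp a b hab
      · exact ⟨hx, hy⟩
    · rintro z (hz | ⟨rfl, h2'⟩)
      · exact hip z hz
      · exact hxy h2'
    · intro Φ hΦ hc
      obtain ⟨z, hz, hz'⟩ := hcon1 Φ hΦ hc
      exact ⟨z, hz, hz'⟩
  have H2 : ∃ Φ : Finset α, Φ ⊆ Δ ∧ IsCSC p (fun a b => s a b ∨ (a = y ∧ b = x)) Φ ∧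
      ∀ z, ¬ PreDom p Φ z := by
    by_contra hcon2
    push_neg at hcon2
    refine h2 ⟨hp, ?_, hip, ?_, ?_⟩
    · rintro a b (hab | ⟨rfl, rfl⟩)
      · exact hs a b hab
      · exact ⟨hy, hx⟩
    · rintro z (hz | ⟨rfl, h2'⟩)
      · exact his z hz
      · exact hxy h2'.symm
    · intro Φ hΦ hc
      obtain ⟨z, hz, hz'⟩ := hcon2 Φ hΦ hc
      exact ⟨z, hz, hz'⟩
  obtain ⟨Φ₁, hΦ₁, hcsc1, hnopd1⟩ := H1
  obtain ⟨Φ₂, hΦ₂, hcsc2, hnopd2⟩ := H2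
  -- x and y belong to Φ₁
  have hxy1 : x ∈ Φ₁ ∧ y ∈ Φ₁ := by
    by_contra hnot
    have hcsc : IsCSC p s Φ₁ := by
      refine ⟨hcsc1.1, fun a ha b hb => ?_⟩
      refine Relation.ReflTransGen.mono ?_ _ _ (hcsc1.2 a ha b hb)
      rintro u v ⟨hu, hv, (hpv | ⟨rfl, rfl⟩) | hsv⟩
      · exact ⟨hu, hv, Or.inl hpv⟩
      · exact absurd ⟨hu, hv⟩ hnot
      · exact ⟨hu, hv, Or.inr hsv⟩
    obtain ⟨z, hzΦ, hz⟩ := hq Φ₁ hΦ₁ hcsc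
    refine hnopd1 z ⟨hzΦ, fun w hw => ⟨?_, ?_⟩⟩
    · rintro (hpw | ⟨rfl, rfl⟩)
      · exact (hz w hw).1 hpw
      · exact hnot ⟨hzΦ, hw⟩
    · rintro (hpw | ⟨rfl, rfl⟩)
      · exact (hz w hw).2 hpw
      · exact hnot ⟨hw, hzΦ⟩
  -- x and y belong to Φ₂
  have hxy2 : x ∈ Φ₂ ∧ y ∈ Φ₂ := by
    by_contra hnot
    have hcsc : IsCSC p s Φ₂ := by
      refine ⟨hcsc2.1, fun a ha b hb => ?_⟩
      refine Relation.ReflTransGen.mono ?_ _ _ (hcsc2.2 a ha b hb)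
      rintro u v ⟨hu, hv, hpv | (hsv | ⟨rfl, rfl⟩)⟩
      · exact ⟨hu, hv, Or.inl hpv⟩
      · exact ⟨hu, hv, Or.inr hsv⟩
      · exact absurd ⟨hv, hu⟩ hnot
    obtain ⟨z, hz⟩ := hq Φ₂ hΦ₂ hcsc
    exact hnopd2 z hz
  -- the union
  set Φ : Finset α := Φ₁ ∪ Φ₂ with hΦdef
  have hΦsub : Φ ⊆ Δ := Finset.union_subset hΦ₁ hΦ₂
  have h1sub : Φ₁ ⊆ Φ := Finset.subset_union_left
  have h2sub : Φ₂ ⊆ Φ := Finset.subset_union_right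
  set R : α → α → Prop := fun u v => u ∈ Φ ∧ v ∈ Φ ∧ (p u v ∨ s u v) with hRdef
  -- a plain path from x to y inside Φ (through Φ₂)
  have Pxy : Relation.ReflTransGen R x y := by
    have hpath := hcsc2.2 x hxy2.1 y hxy2.2
    have hpath' : Relation.ReflTransGen (fun u v => R u v ∨ (u = y ∧ v = x)) x y := by
      refine Relation.ReflTransGen.mono ?_ _ _ hpath
      rintro u v ⟨hu, hv, hpv | (hsv | ⟨rfl, rfl⟩)⟩
      · exact Or.inl ⟨h2sub hu, h2sub hv, Or.inl hpv⟩
      · exact Or.inl ⟨h2sub hu, h2sub hv, Or.inr hsv⟩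
      · exact Or.inr ⟨rfl, rfl⟩
    rcases lastEdge hpath' with h' | h' <;> exact h'
  -- a plain path from y to x inside Φ (through Φ₁)
  have Pyx : Relation.ReflTransGen R y x := by
    have hpath := hcsc1.2 y hxy1.2 x hxy1.1
    have hpath' : Relation.ReflTransGen (fun u v => R u v ∨ (u = x ∧ v = y)) y x := by
      refine Relation.ReflTransGen.mono ?_ _ _ hpath
      rintro u v ⟨hu, hv, (hpv | ⟨rfl, rfl⟩) | hsv⟩
      · exact Or.inl ⟨h1sub hu, h1sub hv, Or.inl hpv⟩
      · exact Or.inr ⟨rfl, rfl⟩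
      · exact Or.inl ⟨h1sub hu, h1sub hv, Or.inr hsv⟩
    rcases lastEdge hpath' with h' | h' <;> exact h'
  -- connectivity within each part, in the plain relation on Φ
  have conn1 : ∀ a ∈ Φ₁, ∀ b ∈ Φ₁, Relation.ReflTransGen R a b := by
    intro a ha b hb
    refine convertPath Pxy (Relation.ReflTransGen.mono ?_ _ _ (hcsc1.2 a ha b hb))
    rintro u v ⟨hu, hv, (hpv | ⟨rfl, rfl⟩) | hsv⟩
    · exact Or.inl ⟨h1sub hu, h1sub hv, Or.inl hpv⟩
    · exact Or.inr ⟨rfl, rfl⟩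
    · exact Or.inl ⟨h1sub hu, h1sub hv, Or.inr hsv⟩
  have conn2 : ∀ a ∈ Φ₂, ∀ b ∈ Φ₂, Relation.ReflTransGen R a b := by
    intro a ha b hb
    refine convertPath Pyx (Relation.ReflTransGen.mono ?_ _ _ (hcsc2.2 a ha b hb))
    rintro u v ⟨hu, hv, hpv | (hsv | ⟨rfl, rfl⟩)⟩
    · exact Or.inl ⟨h2sub hu, h2sub hv, Or.inl hpv⟩
    · exact Or.inl ⟨h2sub hu, h2sub hv, Or.inr hsv⟩
    · exact Or.inr ⟨rfl, rfl⟩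
  -- Φ is a CSC-subset of the original structure
  have hcscΦ : IsCSC p s Φ := by
    refine ⟨hcsc1.1.mono h1sub, fun a ha b hb => ?_⟩
    rcases Finset.mem_union.mp ha with ha1 | ha2 <;>
      rcases Finset.mem_union.mp hb with hb1 | hb2
    · exact conn1 a ha1 b hb1
    · exact (conn1 a ha1 x hxy1.1).trans (conn2 x hxy2.1 b hb2)
    · exact (conn2 a ha2 y hxy2.2).trans (conn1 y hxy1.2 b hb1)
    · exact conn2 a ha2 b hb2
  obtain ⟨z, hzΦ, hz⟩ := hq Φ hΦsub hcscΦ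
  -- z cannot be in Φ₂
  have hz2 : z ∉ Φ₂ := by
    intro hz2
    exact hnopd2 z ⟨hz2, fun w hw => hz w (h2sub hw)⟩
  rcases Finset.mem_union.mp hzΦ with hz1 | hz2'
  · -- z ∈ Φ₁, z ∉ Φ₂ so z ≠ x, z ≠ y
    have hzx : z ≠ x := fun h' => hz2 (h' ▸ hxy2.1)
    have hzy : z ≠ y := fun h' => hz2 (h' ▸ hxy2.2)
    refine hnopd1 z ⟨hz1, fun w hw => ?_⟩
    constructor
    · rintro (hpw | ⟨rfl, rfl⟩)
      · exact (hz w (h1sub hw)).1 hpw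
      · exact hzx rfl
    · rintro (hpw | ⟨rfl, rfl⟩)
      · exact (hz w (h1sub hw)).2 hpw
      · exact hzy rfl
  · exact hz2 hz2'
end

section
/- Every QSM-structure is a QSC-structure, and every QSC-structure is a QSA-structure. -/
/-- Adding a single pair (x,y) to a relation. -/
def addRel {α : Type*} (r : α → α → Prop) (x y : α) : α → α → Prop :=
  fun a b => r a b ∨ (a = x ∧ b = y)

/-- The structure (with relations p, s on domain Δ) has a CSC-subset without
a pre-dominant, i.e. CSCS†(rs) ≠ ∅. -/
def HasBadCSC {α : Type*} (Δ : Finset α) (p s : α → α → Prop) : Prop :=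
  ∃ Φ : Finset α, Φ ⊆ Δ ∧ IsCSC p s Φ ∧ ∀ z, ¬ PreDom p Φ z

/-- A QSC-structure (axioms QSCS1–4, relations confined to the domain Δ). -/
def QSCS {α : Type*} (Δ : Finset α) (p s : α → α → Prop) : Prop :=
  (∀ a b, p a b → a ∈ Δ ∧ b ∈ Δ) ∧ (∀ a b, s a b → a ∈ Δ ∧ b ∈ Δ) ∧
  (∀ x, ¬ p x x) ∧ (∀ x, ¬ s x x) ∧
  (∀ x y, p x y → ¬ s y x) ∧
  (∀ x ∈ Δ, ∀ y ∈ Δ, x ≠ y → HasBadCSC Δ (addRel p x y) s → s y x) ∧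
  (∀ x ∈ Δ, ∀ y ∈ Δ, x ≠ y → HasBadCSC Δ p (addRel s x y) → p y x)

private lemma badCSC_mono {α : Type*} {Δ : Finset α} {p s : α → α → Prop}
    (h : HasBadCSC Δ p s) (x y : α) : HasBadCSC Δ (addRel p x y) s := by
  obtain ⟨Φ, hΦ, ⟨hne, hconn⟩, hpd⟩ := h
  refine ⟨Φ, hΦ, ⟨hne, fun a ha b hb => Relation.ReflTransGen.mono ?_ a b (hconn a ha b hb)⟩,
    fun z hz => hpd z ⟨hz.1, fun w hw =>
      ⟨fun hp' => (hz.2 w hw).1 (Or.inl hp'), fun hp' => (hz.2 w hw).2 (Or.inl hp')⟩⟩⟩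
  rintro u v ⟨h1, h2, h3⟩
  exact ⟨h1, h2, h3.imp Or.inl id⟩

private lemma addRel_eq {α : Type*} {r : α → α → Prop} {x y : α} (h : r x y) :
    addRel r x y = r := by
  funext a b
  apply propext
  constructor
  · rintro (h' | ⟨rfl, rfl⟩)
    · exact h'
    · exact h
  · exact Or.inl

private lemma qsms_no_bad {α : Type*} {Δ : Finset α} {p s : α → α → Prop}
    (h : QSMS Δ p s) : ¬ HasBadCSC Δ p s := by
  classical
  obtain ⟨hp, hs, hsirr, h4, h5, h6⟩ := h
  have pirr : ∀ x, ¬ p x x := by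
    intro x hx
    have hm := hp x x hx
    have := (h4 x hm.1 x hm.2).mp hx
    exact this.2 this.1
  have pasym : ∀ x y, p x y → ¬ p y x := by
    intro x y hxy hyx
    have hm := hp x y hxy
    exact ((h4 x hm.1 y hm.2).mp hxy).2 (((h4 y hm.2 x hm.1).mp hyx).1)
  have ptrans : ∀ x y z, p x y → p y z → p x z := by
    intro x y z hxy hyz
    rcases h6 x y y z hxy hyz with ⟨h1, _⟩ | ⟨_, h1⟩ | ⟨_, h1⟩ | ⟨_, h1⟩ | ⟨_, h1⟩
    · exact h1
    · exact h1
    · exact absurd h1 (pirr y)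
    · exact absurd h1 (pirr y)
    · exact h1
  rintro ⟨Φ, hΦΔ, ⟨hne, hconn⟩, hpd⟩
  have noniso : ∀ v ∈ Φ, ∃ w ∈ Φ, p v w ∨ p w v := by
    intro v hv
    by_contra hcon
    push_neg at hcon
    exact hpd v ⟨hv, fun y hy =>
      ⟨fun h' => (hcon y hy).1 h', fun h' => (hcon y hy).2 h'⟩⟩
  set U : α → Finset α := fun v => Φ.filter (fun w => p v w) with hUdef
  set D : α → Finset α := fun v => Φ.filter (fun w => p w v) with hDdef
  have memU : ∀ v w, w ∈ U v ↔ w ∈ Φ ∧ p v w := by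
    intro v w; simp [hUdef]
  have memD : ∀ v w, w ∈ D v ↔ w ∈ Φ ∧ p w v := by
    intro v w; simp [hDdef]
  have chainU : ∀ u v, U u ⊆ U v ∨ U v ⊆ U u := by
    intro u v
    by_contra hcc
    push_neg at hcc
    obtain ⟨hnuv, hnvu⟩ := hcc
    obtain ⟨y, hyu, hyv⟩ := Finset.not_subset.mp hnuv
    obtain ⟨t, htv, htu⟩ := Finset.not_subset.mp hnvu
    obtain ⟨hyΦ, hpuy⟩ := (memU u y).mp hyu
    have hnvy : ¬ p v y := fun h' => hyv ((memU v y).mpr ⟨hyΦ, h'⟩)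
    obtain ⟨htΦ, hpvt⟩ := (memU v t).mp htv
    have hnut : ¬ p u t := fun h' => htu ((memU u t).mpr ⟨htΦ, h'⟩)
    rcases h6 u y v t hpuy hpvt with ⟨h1, h2⟩ | ⟨h1, h2⟩ | ⟨h1, h2⟩ | ⟨h1, h2⟩ | ⟨h1, h2⟩
    · exact hnut h1
    · exact hnut h2
    · exact hnvy h2
    · exact hnvy h2
    · exact hnut h2
  have chainD : ∀ u v, D u ⊆ D v ∨ D v ⊆ D u := by
    intro u v
    by_contra hcc
    push_neg at hcc
    obtain ⟨hnuv, hnvu⟩ := hcc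
    obtain ⟨x, hxu, hxv⟩ := Finset.not_subset.mp hnuv
    obtain ⟨z, hzv, hzu⟩ := Finset.not_subset.mp hnvu
    obtain ⟨hxΦ, hpxu⟩ := (memD u x).mp hxu
    have hnxv : ¬ p x v := fun h' => hxv ((memD v x).mpr ⟨hxΦ, h'⟩)
    obtain ⟨hzΦ, hpzv⟩ := (memD v z).mp hzv
    have hnzu : ¬ p z u := fun h' => hzu ((memD u z).mpr ⟨hzΦ, h'⟩)
    rcases h6 x u z v hpxu hpzv with ⟨h1, h2⟩ | ⟨h1, h2⟩ | ⟨h1, h2⟩ | ⟨h1, h2⟩ | ⟨h1, h2⟩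
    · exact hnxv h1
    · exact hnxv h2
    · exact hnzu h2
    · exact hnzu h2
    · exact hnxv h2
  set M : Finset α := Φ.filter (fun v => ∀ w ∈ Φ, ¬ p v w) with hMdef
  have memM : ∀ v, v ∈ M ↔ v ∈ Φ ∧ ∀ w ∈ Φ, ¬ p v w := by
    intro v; simp [hMdef]
  have hMne : M.Nonempty := by
    obtain ⟨v, hv, hvmin⟩ := Finset.exists_min_image Φ (fun v => (U v).card) hne
    refine ⟨v, (memM v).mpr ⟨hv, fun w hw hpvw => ?_⟩⟩
    have hsub : U w ⊆ U v := by
      intro t ht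
      obtain ⟨htΦ, hpwt⟩ := (memU w t).mp ht
      exact (memU v t).mpr ⟨htΦ, ptrans v w t hpvw hpwt⟩
    have hss : U w ⊂ U v := by
      refine (Finset.ssubset_iff_of_subset hsub).mpr ⟨w, (memU v w).mpr ⟨hw, hpvw⟩, ?_⟩
      intro hww
      exact pirr w ((memU w w).mp hww).2
    exact absurd (hvmin w hw) (not_le.mpr (Finset.card_lt_card hss))
  obtain ⟨m₀, hm₀M, hm₀min⟩ := Finset.exists_min_image M (fun m => (D m).card) hMne
  have hDsub : ∀ m ∈ M, D m₀ ⊆ D m := by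
    intro m hm
    rcases chainD m₀ m with h' | h'
    · exact h'
    · have heq := Finset.eq_of_subset_of_card_le h' (hm₀min m hm)
      intro a ha
      rw [heq]
      exact ha
  obtain ⟨hm₀Φ, hm₀max⟩ := (memM m₀).mp hm₀M
  obtain ⟨w₀, hw₀Φ, hw₀⟩ := noniso m₀ hm₀Φ
  have hx₀ : ∀ m ∈ M, p w₀ m := by
    rcases hw₀ with h' | h'
    · exact absurd h' (hm₀max w₀ hw₀Φ)
    · intro m hm
      have : w₀ ∈ D m := hDsub m hm ((memD m₀ w₀).mpr ⟨hw₀Φ, h'⟩)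
      exact ((memD m w₀).mp this).2
  set S : Finset α := Φ.filter (fun v => M ⊆ U v) with hSdef
  have hSne : S.Nonempty := by
    refine ⟨w₀, ?_⟩
    rw [hSdef]
    refine Finset.mem_filter.mpr ⟨hw₀Φ, fun m hm => ?_⟩
    exact (memU w₀ m).mpr ⟨((memM m).mp hm).1, hx₀ m hm⟩
  obtain ⟨xs, hxsS, hxsmin⟩ := Finset.exists_min_image S (fun v => (U v).card) hSne
  have hxsS' := Finset.mem_filter.mp (hSdef ▸ hxsS)
  obtain ⟨hxsΦ, hMUxs⟩ := hxsS'
  have cut : ∀ a ∈ Φ, a ∉ U xs → ∀ b ∈ U xs, p a b := by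
    intro a haΦ haB b hbB
    have hnxsa : ¬ p xs a := fun h' => haB ((memU xs a).mpr ⟨haΦ, h'⟩)
    by_cases hUa : ∀ w ∈ Φ, ¬ p a w
    · exact absurd (hMUxs ((memM a).mpr ⟨haΦ, hUa⟩)) haB
    · push_neg at hUa
      obtain ⟨c, hcΦ, hpac⟩ := hUa
      rcases chainU xs a with h' | h'
      · exact ((memU a b).mp (h' hbB)).2
      · by_cases hMa : M ⊆ U a
        · have hmemS : a ∈ S := by
            rw [hSdef]; exact Finset.mem_filter.mpr ⟨haΦ, hMa⟩
          have hEq : U a = U xs := Finset.eq_of_subset_of_card_le h' (hxsmin a hmemS)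
          have hbUa : b ∈ U a := by rw [hEq]; exact hbB
          exact ((memU a b).mp hbUa).2
        · obtain ⟨m, hmM, hmUa⟩ := Finset.not_subset.mp hMa
          obtain ⟨hmΦ, hmmax⟩ := (memM m).mp hmM
          have hpxsm : p xs m := ((memU xs m).mp (hMUxs hmM)).2
          have hnam : ¬ p a m := fun h' => hmUa ((memU a m).mpr ⟨hmΦ, h'⟩)
          rcases h6 a c xs m hpac hpxsm with ⟨h1, h2⟩ | ⟨h1, h2⟩ | ⟨h1, h2⟩ | ⟨h1, h2⟩ | ⟨h1, h2⟩
          · exact absurd h1 hnam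
          · exact absurd h2 hnam
          · exact absurd h1 hnxsa
          · exact absurd h1 (hmmax c hcΦ)
          · exact absurd h2 hnam
  have reach : ∀ v, Relation.ReflTransGen
      (fun u v => u ∈ Φ ∧ v ∈ Φ ∧ (p u v ∨ s u v)) m₀ v → v ∈ U xs := by
    intro v hv
    induction hv with
    | refl => exact hMUxs hm₀M
    | @tail b c _ hstep ih =>
      obtain ⟨hbΦ, hcΦ, hor⟩ := hstep
      by_contra hcB
      have hpcb : p c b := cut c hcΦ hcB b ih
      rcases hor with h' | h'
      · exact pasym b c h' hpcb
      · have hm := hp c b hpcb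
        exact ((h4 c hm.1 b hm.2).mp hpcb).2 h'
  have hxsU : xs ∈ U xs := reach xs (hconn m₀ hm₀Φ xs hxsΦ)
  exact pirr xs ((memU xs xs).mp hxsU).2

/-- Every QSM-structure is a QSC-structure, and every
QSC-structure is a QSA-structure. -/
theorem qsms_qscs_qsas {α : Type*} :
    (∀ (Δ : Finset α) (p s : α → α → Prop), QSMS Δ p s → QSCS Δ p s) ∧
    (∀ (Δ : Finset α) (p s : α → α → Prop), QSCS Δ p s → QSAS Δ p s) := by
  constructor
  · intro Δ p s h
    have hQ := h
    obtain ⟨hp, hs, hsirr, h4, h5, h6⟩ := h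
    have pirr : ∀ x, ¬ p x x := by
      intro x hx
      have hm := hp x x hx
      have := (h4 x hm.1 x hm.2).mp hx
      exact this.2 this.1
    refine ⟨hp, hs, pirr, hsirr, ?_, ?_, ?_⟩
    · intro x y hxy
      have hm := hp x y hxy
      exact ((h4 x hm.1 y hm.2).mp hxy).2
    · intro x hx y hy hne hbad
      by_cases hsyx : s y x
      · exact hsyx
      · exfalso
        have hpxy : p x y := by
          rcases (h5 x hx y hy).mp hne with h' | h' | ⟨_, h'⟩
          · exact h'
          · exact absurd ((h4 y hy x hx).mp h').1 hsyx
          · exact absurd h' hsyx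
        rw [addRel_eq hpxy] at hbad
        exact qsms_no_bad hQ hbad
    · intro x hx y hy hne hbad
      by_cases hpyx : p y x
      · exact hpyx
      · exfalso
        have hsxy : s x y := by
          rcases (h5 x hx y hy).mp hne with h' | h' | ⟨h', _⟩
          · exact ((h4 x hx y hy).mp h').1
          · exact absurd h' hpyx
          · exact h'
        rw [addRel_eq hsxy] at hbad
        exact qsms_no_bad hQ hbad
  · intro Δ p s h
    obtain ⟨hp, hs, hpirr, hsirr, h5, h6, h7⟩ := h
    refine ⟨hp, hs, hpirr, hsirr, ?_⟩
    intro Φ hΦ hCSC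
    by_contra hno
    push_neg at hno
    have hbad : HasBadCSC Δ p s := ⟨Φ, hΦ, hCSC, hno⟩
    obtain ⟨x, hx⟩ := hCSC.1
    have hnx := hno x
    have hexy : ∃ y ∈ Φ, p x y ∨ p y x := by
      by_contra hc
      push_neg at hc
      exact hnx ⟨hx, fun y hy => ⟨(hc y hy).1, (hc y hy).2⟩⟩
    obtain ⟨y, hy, hxy⟩ := hexy
    rcases hxy with h' | h'
    · have hmm := hp x y h'
      have hne : x ≠ y := fun he => hpirr x (he ▸ h')
      have hsyx := h6 x hmm.1 y hmm.2 hne (badCSC_mono hbad x y)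
      exact h5 x y h' hsyx
    · have hmm := hp y x h'
      have hne : y ≠ x := fun he => hpirr y (he ▸ h')
      have hsxy := h6 y hmm.1 x hmm.2 hne (badCSC_mono hbad y x)
      exact h5 y x h' hsxy
end

section
/- In a QSC-structure (Δ,≺,⊏) the following derived laws hold: (a) x ≺ y implies x ⊏ y; (b) x ≺ y ⊏ z ≺ t implies x ≺ t; (c) x ⊏ y ≺ z or x ≺ y ⊏ z implies x ⊏ z; (d) x ⊏ y ≺ z ⊏ t with t ≠ x implies x ⊏ t. -/
section Aux

variable {α : Type*}

private lemma conn2 {R : α → α → Prop} {x y : α}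
    (h1 : R x y) (h2 : R y x) :
    ∀ a, (a = x ∨ a = y) → ∀ b, (b = x ∨ b = y) →
      Relation.ReflTransGen R a b := by
  have tox : ∀ a, (a = x ∨ a = y) → Relation.ReflTransGen R a x := by
    rintro a (rfl | rfl)
    · exact .refl
    · exact .single h2
  have fromx : ∀ b, (b = x ∨ b = y) → Relation.ReflTransGen R x b := by
    rintro b (rfl | rfl)
    · exact .refl
    · exact .single h1
  exact fun a ha b hb => (tox a ha).trans (fromx b hb)

private lemma conn3 {R : α → α → Prop} {x y z : α}
    (h1 : R x y) (h2 : R y z) (h3 : R z x) :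
    ∀ a, (a = x ∨ a = y ∨ a = z) → ∀ b, (b = x ∨ b = y ∨ b = z) →
      Relation.ReflTransGen R a b := by
  have tox : ∀ a, (a = x ∨ a = y ∨ a = z) → Relation.ReflTransGen R a x := by
    rintro a (rfl | rfl | rfl)
    · exact .refl
    · exact .head h2 (.single h3)
    · exact .single h3
  have fromx : ∀ b, (b = x ∨ b = y ∨ b = z) → Relation.ReflTransGen R x b := by
    rintro b (rfl | rfl | rfl)
    · exact .refl
    · exact .single h1
    · exact .head h1 (.single h2)
  exact fun a ha b hb => (tox a ha).trans (fromx b hb)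

private lemma conn4 {R : α → α → Prop} {x y z t : α}
    (h1 : R x y) (h2 : R y z) (h3 : R z t) (h4 : R t x) :
    ∀ a, (a = x ∨ a = y ∨ a = z ∨ a = t) → ∀ b, (b = x ∨ b = y ∨ b = z ∨ b = t) →
      Relation.ReflTransGen R a b := by
  have tox : ∀ a, (a = x ∨ a = y ∨ a = z ∨ a = t) → Relation.ReflTransGen R a x := by
    rintro a (rfl | rfl | rfl | rfl)
    · exact .refl
    · exact .head h2 (.head h3 (.single h4))
    · exact .head h3 (.single h4)
    · exact .single h4
  have fromx : ∀ b, (b = x ∨ b = y ∨ b = z ∨ b = t) → Relation.ReflTransGen R x b := by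
    rintro b (rfl | rfl | rfl | rfl)
    · exact .refl
    · exact .single h1
    · exact .head h1 (.single h2)
    · exact .head h1 (.head h2 (.single h3))
  exact fun a ha b hb => (tox a ha).trans (fromx b hb)

private lemma badCSC2 (Δ : Finset α) (p s : α → α → Prop) {x y : α}
    (hx : x ∈ Δ) (hy : y ∈ Δ)
    (e1 : p x y ∨ s x y) (e2 : p y x ∨ s y x)
    (d : ∀ w, (w = x ∨ w = y) → ∃ a, (a = x ∨ a = y) ∧ (p w a ∨ p a w)) :
    HasBadCSC Δ p s := by
  classical
  refine ⟨{x, y}, ?_, ⟨⟨x, by simp⟩, ?_⟩, ?_⟩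
  · intro a ha
    simp only [Finset.mem_insert, Finset.mem_singleton] at ha
    rcases ha with rfl | rfl <;> assumption
  · intro a ha b hb
    simp only [Finset.mem_insert, Finset.mem_singleton] at ha hb
    exact conn2 ⟨by simp, by simp, e1⟩ ⟨by simp, by simp, e2⟩ a ha b hb
  · rintro w ⟨hw, hall⟩
    simp only [Finset.mem_insert, Finset.mem_singleton] at hw
    obtain ⟨a, haΦ, hpa⟩ := d w hw
    have haΦ' : a ∈ ({x, y} : Finset α) := by
      rcases haΦ with rfl | rfl <;> simp
    rcases hpa with hp | hp
    · exact (hall a haΦ').1 hp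
    · exact (hall a haΦ').2 hp

private lemma badCSC3 (Δ : Finset α) (p s : α → α → Prop) {x y z : α}
    (hx : x ∈ Δ) (hy : y ∈ Δ) (hz : z ∈ Δ)
    (e1 : p x y ∨ s x y) (e2 : p y z ∨ s y z) (e3 : p z x ∨ s z x)
    (d : ∀ w, (w = x ∨ w = y ∨ w = z) →
        ∃ a, (a = x ∨ a = y ∨ a = z) ∧ (p w a ∨ p a w)) :
    HasBadCSC Δ p s := by
  classical
  refine ⟨{x, y, z}, ?_, ⟨⟨x, by simp⟩, ?_⟩, ?_⟩
  · intro a ha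
    simp only [Finset.mem_insert, Finset.mem_singleton] at ha
    rcases ha with rfl | rfl | rfl <;> assumption
  · intro a ha b hb
    simp only [Finset.mem_insert, Finset.mem_singleton] at ha hb
    exact conn3 ⟨by simp, by simp, e1⟩ ⟨by simp, by simp, e2⟩
      ⟨by simp, by simp, e3⟩ a ha b hb
  · rintro w ⟨hw, hall⟩
    simp only [Finset.mem_insert, Finset.mem_singleton] at hw
    obtain ⟨a, haΦ, hpa⟩ := d w hw
    have haΦ' : a ∈ ({x, y, z} : Finset α) := by
      rcases haΦ with rfl | rfl | rfl <;> simp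
    rcases hpa with hp | hp
    · exact (hall a haΦ').1 hp
    · exact (hall a haΦ').2 hp

private lemma badCSC4 (Δ : Finset α) (p s : α → α → Prop) {x y z t : α}
    (hx : x ∈ Δ) (hy : y ∈ Δ) (hz : z ∈ Δ) (ht : t ∈ Δ)
    (e1 : p x y ∨ s x y) (e2 : p y z ∨ s y z) (e3 : p z t ∨ s z t)
    (e4 : p t x ∨ s t x)
    (d : ∀ w, (w = x ∨ w = y ∨ w = z ∨ w = t) →
        ∃ a, (a = x ∨ a = y ∨ a = z ∨ a = t) ∧ (p w a ∨ p a w)) :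
    HasBadCSC Δ p s := by
  classical
  refine ⟨{x, y, z, t}, ?_, ⟨⟨x, by simp⟩, ?_⟩, ?_⟩
  · intro a ha
    simp only [Finset.mem_insert, Finset.mem_singleton] at ha
    rcases ha with rfl | rfl | rfl | rfl <;> assumption
  · intro a ha b hb
    simp only [Finset.mem_insert, Finset.mem_singleton] at ha hb
    exact conn4 ⟨by simp, by simp, e1⟩ ⟨by simp, by simp, e2⟩
      ⟨by simp, by simp, e3⟩ ⟨by simp, by simp, e4⟩ a ha b hb
  · rintro w ⟨hw, hall⟩
    simp only [Finset.mem_insert, Finset.mem_singleton] at hw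
    obtain ⟨a, haΦ, hpa⟩ := d w hw
    have haΦ' : a ∈ ({x, y, z, t} : Finset α) := by
      rcases haΦ with rfl | rfl | rfl | rfl <;> simp
    rcases hpa with hp | hp
    · exact (hall a haΦ').1 hp
    · exact (hall a haΦ').2 hp

/-- In a QSC-structure, every CSC-subset has a pre-dominant. -/
private lemma qscs_nobad {Δ : Finset α} {p s : α → α → Prop}
    (h : QSCS Δ p s) : ¬ HasBadCSC Δ p s := by
  obtain ⟨hpΔ, hsΔ, hpirr, hsirr, hps, hax3, hax4⟩ := h
  rintro ⟨Φ, hΦΔ, ⟨⟨a, ha⟩, hconn⟩, hbad⟩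
  have hb : ∃ b ∈ Φ, p a b ∨ p b a := by
    by_contra hc
    push_neg at hc
    exact hbad a ⟨ha, fun y hy => hc y hy⟩
  obtain ⟨b, hbΦ, hab⟩ := hb
  have hne : a ≠ b := by
    rintro rfl
    rcases hab with hp | hp <;> exact hpirr a hp
  have haΔ := hΦΔ ha
  have hbΔ := hΦΔ hbΦ
  -- Extending p keeps the CSC bad
  have hext1 : ∀ u v : α, HasBadCSC Δ (addRel p u v) s := by
    intro u v
    refine ⟨Φ, hΦΔ, ⟨⟨a, ha⟩, fun c hc d hd => Relation.ReflTransGen.mono ?_ _ _ (hconn c hc d hd)⟩, ?_⟩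
    · rintro e f ⟨h1, h2, h3⟩
      exact ⟨h1, h2, h3.imp Or.inl id⟩
    · rintro w ⟨hw, hall⟩
      exact hbad w ⟨hw, fun y hy =>
        ⟨fun hp => (hall y hy).1 (Or.inl hp), fun hp => (hall y hy).2 (Or.inl hp)⟩⟩
  -- Extending s keeps the CSC bad
  have hext2 : ∀ u v : α, HasBadCSC Δ p (addRel s u v) := by
    intro u v
    refine ⟨Φ, hΦΔ, ⟨⟨a, ha⟩, fun c hc d hd => Relation.ReflTransGen.mono ?_ _ _ (hconn c hc d hd)⟩, hbad⟩
    rintro e f ⟨h1, h2, h3⟩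
    exact ⟨h1, h2, h3.imp id Or.inl⟩
  have hsab : s a b := hax3 b hbΔ a haΔ hne.symm (hext1 b a)
  have hpba : p b a := hax4 a haΔ b hbΔ hne (hext2 a b)
  exact hps b a hpba hsab

end Aux

/-- Derived laws holding in every QSC-structure. -/
theorem qscs_derived_laws {α : Type*}
    (Δ : Finset α) (p s : α → α → Prop) (h : QSCS Δ p s) :
    -- (a) x ≺ y implies x ⊏ y
    (∀ x y, p x y → s x y) ∧
    -- (b) x ≺ y ⊏ z ≺ t implies x ≺ t
    (∀ x y z t, p x y → s y z → p z t → p x t) ∧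
    -- (c) x ⊏ y ≺ z or x ≺ y ⊏ z implies x ⊏ z
    (∀ x y z, (s x y ∧ p y z) ∨ (p x y ∧ s y z) → s x z) ∧
    -- (d) x ⊏ y ≺ z ⊏ t with t ≠ x implies x ⊏ t
    (∀ x y z t, s x y → p y z → s z t → t ≠ x → s x t) := by
  have hnobad := qscs_nobad h
  obtain ⟨hpΔ, hsΔ, hpirr, hsirr, hps, hax3, hax4⟩ := h
  refine ⟨?_, ?_, ?_, ?_⟩
  · -- (a)
    intro x y hxy
    have hx := (hpΔ x y hxy).1
    have hy := (hpΔ x y hxy).2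
    have hne : y ≠ x := by rintro rfl; exact hpirr _ hxy
    refine hax3 y hy x hx hne ?_
    refine badCSC2 Δ (addRel p y x) s hx hy
      (Or.inl (Or.inl hxy)) (Or.inl (Or.inr ⟨rfl, rfl⟩)) ?_
    rintro w (rfl | rfl)
    · exact ⟨y, Or.inr rfl, Or.inl (Or.inl hxy)⟩
    · exact ⟨x, Or.inl rfl, Or.inl (Or.inr ⟨rfl, rfl⟩)⟩
  · -- (b)
    intro x y z t hxy hyz hzt
    have hx := (hpΔ x y hxy).1
    have hy := (hpΔ x y hxy).2
    have hz := (hpΔ z t hzt).1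
    have ht := (hpΔ z t hzt).2
    by_cases htx : t = x
    · subst htx
      exfalso
      refine hnobad (badCSC3 Δ p s ht hy hz
        (Or.inl hxy) (Or.inr hyz) (Or.inl hzt) ?_)
      rintro w (rfl | rfl | rfl)
      · exact ⟨y, Or.inr (Or.inl rfl), Or.inl hxy⟩
      · exact ⟨t, Or.inl rfl, Or.inr hxy⟩
      · exact ⟨t, Or.inl rfl, Or.inl hzt⟩
    · refine hax4 t ht x hx htx ?_
      refine badCSC4 Δ p (addRel s t x) hx hy hz ht
        (Or.inl hxy) (Or.inr (Or.inl hyz)) (Or.inl hzt)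
        (Or.inr (Or.inr ⟨rfl, rfl⟩)) ?_
      rintro w (rfl | rfl | rfl | rfl)
      · exact ⟨y, Or.inr (Or.inl rfl), Or.inl hxy⟩
      · exact ⟨x, Or.inl rfl, Or.inr hxy⟩
      · exact ⟨t, Or.inr (Or.inr (Or.inr rfl)), Or.inl hzt⟩
      · exact ⟨z, Or.inr (Or.inr (Or.inl rfl)), Or.inr hzt⟩
  · -- (c)
    rintro x y z (⟨hxy, hyz⟩ | ⟨hxy, hyz⟩)
    · -- s x y, p y z
      have hx := (hsΔ x y hxy).1
      have hy := (hsΔ x y hxy).2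
      have hz := (hpΔ y z hyz).2
      have hzx : z ≠ x := by
        rintro rfl; exact hps _ _ hyz hxy
      refine hax3 z hz x hx hzx ?_
      refine badCSC3 Δ (addRel p z x) s hx hy hz
        (Or.inr hxy) (Or.inl (Or.inl hyz)) (Or.inl (Or.inr ⟨rfl, rfl⟩)) ?_
      rintro w (rfl | rfl | rfl)
      · exact ⟨z, Or.inr (Or.inr rfl), Or.inr (Or.inr ⟨rfl, rfl⟩)⟩
      · exact ⟨z, Or.inr (Or.inr rfl), Or.inl (Or.inl hyz)⟩
      · exact ⟨y, Or.inr (Or.inl rfl), Or.inr (Or.inl hyz)⟩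
    · -- p x y, s y z
      have hx := (hpΔ x y hxy).1
      have hy := (hpΔ x y hxy).2
      have hz := (hsΔ y z hyz).2
      have hzx : z ≠ x := by
        rintro rfl; exact hps _ _ hxy hyz
      refine hax3 z hz x hx hzx ?_
      refine badCSC3 Δ (addRel p z x) s hx hy hz
        (Or.inl (Or.inl hxy)) (Or.inr hyz) (Or.inl (Or.inr ⟨rfl, rfl⟩)) ?_
      rintro w (rfl | rfl | rfl)
      · exact ⟨y, Or.inr (Or.inl rfl), Or.inl (Or.inl hxy)⟩
      · exact ⟨x, Or.inl rfl, Or.inr (Or.inl hxy)⟩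
      · exact ⟨x, Or.inl rfl, Or.inl (Or.inr ⟨rfl, rfl⟩)⟩
  · -- (d)
    intro x y z t hxy hyz hzt htx
    have hx := (hsΔ x y hxy).1
    have hy := (hsΔ x y hxy).2
    have hz := (hsΔ z t hzt).1
    have ht := (hsΔ z t hzt).2
    refine hax3 t ht x hx htx ?_
    refine badCSC4 Δ (addRel p t x) s hx hy hz ht
      (Or.inr hxy) (Or.inl (Or.inl hyz)) (Or.inr hzt)
      (Or.inl (Or.inr ⟨rfl, rfl⟩)) ?_
    rintro w (rfl | rfl | rfl | rfl)
    · exact ⟨t, Or.inr (Or.inr (Or.inr rfl)), Or.inr (Or.inr ⟨rfl, rfl⟩)⟩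
    · exact ⟨z, Or.inr (Or.inr (Or.inl rfl)), Or.inl (Or.inl hyz)⟩
    · exact ⟨y, Or.inr (Or.inl rfl), Or.inr (Or.inl hyz)⟩
    · exact ⟨x, Or.inl rfl, Or.inl (Or.inr ⟨rfl, rfl⟩)⟩
end
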